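/- arXiv:math/0303312 — 4 statements merged into one kernel-verified Lean document; each statement's English description precedes it below -/
import Mathlib

section
/- Let p and q be positive integers and let π be a partition of [p+q] with exactly one (p,q)-connecting block B₀; write B₀' = B₀∩{1,...,p} and B₀'' = B₀∩{p+1,...,p+q}. Then the number of permutations τ ∈ S([p+q]) which are standard in (p,q)-annular sense and whose partition into orbits equals π is exactly card(B₀')·card(B₀''). -/
/-- The permutation induced by `f` on the subset `B`: an element `b` is sent to the first
element of the sequence `f b, f (f b), f (f (f b)), ...` that lies in `B`
(and is left fixed if no iterate ever returns to `B`). -/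
noncomputable def induced {α : Type*} (f : α → α) (B : Set α) (b : α) : α := by
  classical
  exact if h : ∃ k, 0 < k ∧ f^[k] b ∈ B then f^[Nat.find h] b else b

/-- `A` is an orbit of the permutation `τ`. -/
def IsOrbit {α : Type*} (τ : Equiv.Perm α) (A : Set α) : Prop :=
  ∃ a, A = {b | τ.SameCycle a b}

/-- The number of orbits of `τ` (fixed points count as orbits). -/
noncomputable def numOrbits {α : Type*} (τ : Equiv.Perm α) : ℕ :=
  Set.ncard {A : Set α | IsOrbit τ A}

/-- `induced f S` acts on `a, b, c` as the 3-cycle `(a, b, c)`. -/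
def MapsCyc3 {α : Type*} (f : α → α) (S : Set α) (a b c : α) : Prop :=
  induced f S a = b ∧ induced f S b = c ∧ induced f S c = a

/-- `induced f S` acts on `a, b, c, d` as the 4-cycle `(a, b, c, d)`. -/
def MapsCyc4 {α : Type*} (f : α → α) (S : Set α) (a b c d : α) : Prop :=
  induced f S a = b ∧ induced f S b = c ∧ induced f S c = d ∧ induced f S d = a

/-- `induced f S` acts on `a, b, c, d` as the product of transpositions `(a, c)(b, d)`. -/
def MapsSwap2 {α : Type*} (f : α → α) (S : Set α) (a b c d : α) : Prop :=
  induced f S a = c ∧ induced f S c = a ∧ induced f S b = d ∧ induced f S d = b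

/-- `induced f S` acts on `x, y` as the transposition `(x, y)`. -/
def MapsSwap {α : Type*} (f : α → α) (S : Set α) (x y : α) : Prop :=
  induced f S x = y ∧ induced f S y = x

/-- `σ` is standard with respect to the "forward cycle" `γ₀`, i.e. `σ∣B = γ₀∣B` for
every orbit `B` of `σ`. -/
def DiscStandardRel {n : ℕ} (γ₀ σ : Equiv.Perm (Fin n)) : Prop :=
  ∀ A : Set (Fin n), IsOrbit σ A → ∀ b ∈ A, induced (⇑σ) A b = induced (⇑γ₀) A b

/-- The orbit partition of `σ` has no crossing: there are no `a < b < c < d` with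
`a, c` in one orbit and `b, d` in a different orbit. -/
def OrbitsNoCrossing {n : ℕ} (σ : Equiv.Perm (Fin n)) : Prop :=
  ¬ ∃ a b c d : Fin n, a < b ∧ b < c ∧ c < d ∧
      σ.SameCycle a c ∧ σ.SameCycle b d ∧ ¬ σ.SameCycle a b

/-- Disc non-crossing relative to a given forward cycle `γ₀`. -/
def DiscNCRel {n : ℕ} (γ₀ σ : Equiv.Perm (Fin n)) : Prop :=
  DiscStandardRel γ₀ σ ∧ OrbitsNoCrossing σ

/-- The set `S_disc-nc(n)` of disc non-crossing permutations of `[n]`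
(here `[n] = {1, …, n}` is modelled by `Fin n`, and the forward cycle
`γ₀ = (1, 2, …, n)` is `finRotate n`). -/
def DiscNC {n : ℕ} (σ : Equiv.Perm (Fin n)) : Prop :=
  DiscNCRel (finRotate n) σ

/-- The external points `{1, …, p}` (0-indexed: values `< p`). -/
def extSet (p q : ℕ) : Set (Fin (p + q)) := {i | (i : ℕ) < p}

/-- The internal points `{p+1, …, p+q}` (0-indexed: values `≥ p`). -/
def intSet (p q : ℕ) : Set (Fin (p + q)) := {i | p ≤ (i : ℕ)}

/-- `γ_ext = (1, 2, …, p)`, the forward cycle on the external points. -/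
def gammaExt (p q : ℕ) : Equiv.Perm (Fin (p + q)) :=
  ((List.finRange (p + q)).take p).formPerm

/-- `γ_int = (p+1, p+2, …, p+q)`, the forward cycle on the internal points. -/
def gammaInt (p q : ℕ) : Equiv.Perm (Fin (p + q)) :=
  ((List.finRange (p + q)).drop p).formPerm

/-- `γ = γ_ext · γ_int`. -/
def gammaAnn (p q : ℕ) : Equiv.Perm (Fin (p + q)) := gammaExt p q * gammaInt p q

/-- `λ_{x,y}`: the permutation fixing `x` and `y` and cycling the remaining points as
`(γ_ext(x), γ_ext²(x), …, γ_ext^{p-1}(x), γ_int(y), γ_int²(y), …, γ_int^{q-1}(y))`. -/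
def lamPerm (p q : ℕ) (x y : Fin (p + q)) : Equiv.Perm (Fin (p + q)) :=
  (((List.range (p - 1)).map fun k => (gammaExt p q ^ (k + 1)) x) ++
    ((List.range (q - 1)).map fun k => (gammaInt p q ^ (k + 1)) y)).formPerm

/-- `τ` is standard in `(p,q)`-annular sense. -/
def AnnStandard (p q : ℕ) (τ : Equiv.Perm (Fin (p + q))) : Prop :=
  (∀ A : Set (Fin (p + q)), IsOrbit τ A →
    (∀ b ∈ A ∩ extSet p q,
        induced (⇑τ) (A ∩ extSet p q) b = induced (⇑(gammaExt p q)) (A ∩ extSet p q) b) ∧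
    (∀ b ∈ A ∩ intSet p q,
        induced (⇑τ) (A ∩ intSet p q) b = induced (⇑(gammaInt p q)) (A ∩ intSet p q) b)) ∧
  (∀ A : Set (Fin (p + q)), IsOrbit τ A →
    (A ∩ extSet p q).Nonempty → (A ∩ intSet p q).Nonempty →
    (∃! a, a ∈ A ∩ extSet p q ∧ τ a ∈ intSet p q) ∧
    (∃! a, a ∈ A ∩ intSet p q ∧ τ a ∈ extSet p q))

/-- The annular crossing pattern (AC-1). -/
def AC1 (p q : ℕ) (τ : Equiv.Perm (Fin (p + q))) : Prop :=
  ∃ a b c d : Fin (p + q), List.Pairwise (· ≠ ·) [a, b, c, d] ∧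
    MapsCyc4 (⇑(gammaAnn p q)) {a, b, c, d} a b c d ∧
    MapsSwap2 (⇑τ) {a, b, c, d} a b c d

/-- The annular crossing pattern (AC-2). -/
def AC2 (p q : ℕ) (τ : Equiv.Perm (Fin (p + q))) : Prop :=
  ∃ a b c x y : Fin (p + q), List.Pairwise (· ≠ ·) [a, b, c, x, y] ∧
    x ∈ extSet p q ∧ y ∈ intSet p q ∧
    MapsCyc3 (⇑(lamPerm p q x y)) {a, b, c} a b c ∧
    MapsCyc3 (⇑τ) {a, b, c, x, y} a c b ∧
    MapsSwap (⇑τ) {a, b, c, x, y} x y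

/-- The annular crossing pattern (AC-3). -/
def AC3 (p q : ℕ) (τ : Equiv.Perm (Fin (p + q))) : Prop :=
  ∃ a b c d x y : Fin (p + q), List.Pairwise (· ≠ ·) [a, b, c, d, x, y] ∧
    x ∈ extSet p q ∧ y ∈ intSet p q ∧
    MapsCyc4 (⇑(lamPerm p q x y)) {a, b, c, d} a b c d ∧
    MapsSwap2 (⇑τ) {a, b, c, d, x, y} a b c d ∧
    MapsSwap (⇑τ) {a, b, c, d, x, y} x y

/-- The set `S_ann-nc(p,q)` of `(p,q)`-annular non-crossing permutations. -/
def AnnNC (p q : ℕ) (τ : Equiv.Perm (Fin (p + q))) : Prop :=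
  AnnStandard p q τ ∧ ¬ AC1 p q τ ∧ ¬ AC2 p q τ ∧ ¬ AC3 p q τ

/-- A `(p,q)`-connecting set: meets both the external and internal points. -/
def ConnectingBlock (p q : ℕ) (B : Set (Fin (p + q))) : Prop :=
  (B ∩ extSet p q).Nonempty ∧ (B ∩ intSet p q).Nonempty

/-- `τ` is `(p,q)`-connected: it has a `(p,q)`-connecting orbit. -/
def AnnConnected (p q : ℕ) (τ : Equiv.Perm (Fin (p + q))) : Prop :=
  ∃ A : Set (Fin (p + q)), IsOrbit τ A ∧ ConnectingBlock p q A

/-- A family of blocks has no crossing: no `a < b < c < d` with `a, c` in one block and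
`b, d` in a different block. -/
def NoCrossing {n : ℕ} (ρ : Set (Set (Fin n))) : Prop :=
  ¬ ∃ (a b c d : Fin n) (B C : Set (Fin n)), B ∈ ρ ∧ C ∈ ρ ∧ B ≠ C ∧
      a < b ∧ b < c ∧ c < d ∧ a ∈ B ∧ c ∈ B ∧ b ∈ C ∧ d ∈ C

section Induced
variable {α : Type*} (f : α → α) (B : Set α)

open Classical in
theorem induced_eq_of {k : ℕ} {b : α} (hk : 0 < k) (hmem : f^[k] b ∈ B)
    (hmin : ∀ j, 0 < j → j < k → f^[j] b ∉ B) : induced f B b = f^[k] b := by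
  classical
  have h : ∃ k, 0 < k ∧ f^[k] b ∈ B := ⟨k, hk, hmem⟩
  rw [induced, dif_pos h]
  congr 1
  rw [Nat.find_eq_iff]
  exact ⟨⟨hk, hmem⟩, fun m hm => by
    rcases Nat.eq_zero_or_pos m with h0 | h0
    · simp [h0]
    · exact fun hc => hmin m h0 hm hc.2⟩

theorem induced_spec {b : α} (h : ∃ k, 0 < k ∧ f^[k] b ∈ B) :
    ∃ k, 0 < k ∧ f^[k] b ∈ B ∧ induced f B b = f^[k] b ∧
      ∀ j, 0 < j → j < k → f^[j] b ∉ B := by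
  classical
  refine ⟨Nat.find h, (Nat.find_spec h).1, (Nat.find_spec h).2, ?_, ?_⟩
  · rw [induced, dif_pos h]
  · intro j hj hjk hc
    exact Nat.find_min h hjk ⟨hj, hc⟩

theorem induced_apply_of_apply_mem {b : α} (h : f b ∈ B) : induced f B b = f b := by
  simpa using induced_eq_of f B Nat.one_pos (by simpa using h) (by omega)

theorem exists_return (σ : Equiv.Perm α) [Finite α] {B : Set α} {b : α} (hb : b ∈ B) :
    ∃ k, 0 < k ∧ (⇑σ)^[k] b ∈ B := by
  have : ∃ n, 0 < n ∧ σ ^ n = 1 := ⟨orderOf σ, orderOf_pos σ, pow_orderOf_eq_one σ⟩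
  obtain ⟨n, hn, h1⟩ := this
  refine ⟨n, hn, ?_⟩
  rw [← Equiv.Perm.coe_pow, h1]; simpa using hb

theorem induced_mem (σ : Equiv.Perm α) [Finite α] {B : Set α} {b : α} (hb : b ∈ B) :
    induced (⇑σ) B b ∈ B := by
  obtain ⟨k, hk, hkm, heq, -⟩ := induced_spec (⇑σ) B (exists_return σ hb)
  rw [heq]; exact hkm

theorem induced_injOn (σ : Equiv.Perm α) [Finite α] {B : Set α} :
    Set.InjOn (induced (⇑σ) B) B := by
  intro x hx y hy hxy
  obtain ⟨k, hk, hkm, heqx, hminx⟩ := induced_spec (⇑σ) B (exists_return σ hx)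
  obtain ⟨m, hm, hmm, heqy, hminy⟩ := induced_spec (⇑σ) B (exists_return σ hy)
  rw [heqx, heqy] at hxy
  have hinj : ∀ n : ℕ, Function.Injective ((⇑σ)^[n]) := fun n => σ.injective.iterate n
  rcases le_total k m with h | h
  · have : (⇑σ)^[k] x = (⇑σ)^[k] ((⇑σ)^[m - k] y) := by
      rw [← Function.iterate_add_apply, Nat.add_sub_cancel' h, hxy]
    have hxy' : x = (⇑σ)^[m - k] y := hinj k this
    rcases Nat.eq_zero_or_pos (m - k) with h0 | h0
    · have : k = m := by omega
      subst this
      exact hinj k hxy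
    · exact absurd (hxy' ▸ hx) (hminy _ h0 (by omega))
  · have : (⇑σ)^[m] ((⇑σ)^[k - m] x) = (⇑σ)^[m] y := by
      rw [← Function.iterate_add_apply]
      rw [show m + (k - m) = k by omega, hxy]
    have hxy' : (⇑σ)^[k - m] x = y := hinj m this
    rcases Nat.eq_zero_or_pos (k - m) with h0 | h0
    · have : k = m := by omega
      subst this
      exact hinj k hxy
    · exact absurd (hxy' ▸ hy) (hminx _ h0 (by omega))

theorem induced_reach (σ : Equiv.Perm α) {B : Set α} {x : α} (hx : x ∈ B) :
    ∀ m : ℕ, (⇑σ)^[m] x ∈ B → ∃ k, (induced (⇑σ) B)^[k] x = (⇑σ)^[m] x := by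
  intro m
  induction m using Nat.strong_induction_on generalizing x with
  | _ m ih =>
    intro hm
    rcases Nat.eq_zero_or_pos m with h0 | h0
    · subst h0; exact ⟨0, rfl⟩
    · have hex : ∃ j, 0 < j ∧ (⇑σ)^[j] x ∈ B := ⟨m, h0, hm⟩
      classical
      obtain ⟨n, hn, hnm, heq, hmin⟩ := induced_spec (⇑σ) B hex
      have hnle : n ≤ m := by
        by_contra hc
        exact hmin m h0 (by omega) hm
      have hrest : (⇑σ)^[m - n] ((⇑σ)^[n] x) = (⇑σ)^[m] x := by
        rw [← Function.iterate_add_apply]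
        congr 1; omega
      obtain ⟨k, hk⟩ := ih (m - n) (by omega) hnm (hrest ▸ hm)
      refine ⟨k + 1, ?_⟩
      rw [Function.iterate_succ_apply, heq, hk, hrest]

theorem iterate_agree {T g : α → α} {x : α} {k : ℕ}
    (h : ∀ i < k, T (g^[i] x) = g (g^[i] x)) : T^[k] x = g^[k] x := by
  induction k with
  | zero => rfl
  | succ k ih =>
    rw [Function.iterate_succ_apply', Function.iterate_succ_apply',
      ih (fun i hi => h i (by omega)), h k (by omega)]

theorem iterate_mem {g : α → α} {S : Set α} (hg : ∀ w ∈ S, g w ∈ S) {x : α} (hx : x ∈ S) :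
    ∀ k, g^[k] x ∈ S := by
  intro k
  induction k with
  | zero => exact hx
  | succ k ih => rw [Function.iterate_succ_apply']; exact hg _ ih

/-- From `x ∈ S`, reach the special point `z` by `T`-iterates, where `T` agrees with `g`
on `S \ {z}`. -/
theorem reach_special {T g : α → α} {S : Set α} {z x : α}
    (hag : ∀ w ∈ S, w ≠ z → T w = g w) (hginv : ∀ w ∈ S, g w ∈ S) (hx : x ∈ S)
    (hex : ∃ m, g^[m] x = z) : ∃ k, T^[k] x = z := by
  classical
  set n := Nat.find hex with hn
  have hspec : g^[n] x = z := Nat.find_spec hex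
  have hmin : ∀ j < n, g^[j] x ≠ z := fun j hj => Nat.find_min hex hj
  refine ⟨n, ?_⟩
  rw [iterate_agree (fun i hi => hag _ (iterate_mem hginv hx i) (hmin i hi))]
  exact hspec

/-- From `g z`, reach any `y ∈ S` by `T`-iterates, where `T` agrees with `g` on `S \ {z}`. -/
theorem reach_from_special {T g : α → α} {S : Set α} {z y : α}
    (hag : ∀ w ∈ S, w ≠ z → T w = g w) (hginv : ∀ w ∈ S, g w ∈ S) (hz : z ∈ S) (hy : y ∈ S)
    (hex : ∃ m, g^[m] (g z) = y) : ∃ k, T^[k] (g z) = y := by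
  classical
  set n := Nat.find hex with hn
  have hspec : g^[n] (g z) = y := Nat.find_spec hex
  have hmin : ∀ j < n, g^[j] (g z) ≠ y := fun j hj => Nat.find_min hex hj
  have hgz : g z ∈ S := hginv _ hz
  have hinter : ∀ i < n, g^[i] (g z) ≠ z := by
    intro i hi hc
    have h1 : g^[i + 1] (g z) = g z := by
      rw [Function.iterate_succ_apply', hc]
    have h2 : g^[n - i - 1] (g^[i + 1] (g z)) = y := by
      rw [← Function.iterate_add_apply, show n - i - 1 + (i + 1) = n by omega]
      exact hspec
    rw [h1] at h2
    exact hmin (n - i - 1) (by omega) h2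
  refine ⟨n, ?_⟩
  rw [iterate_agree (fun i hi => hag _ (iterate_mem hginv hgz i) (hinter i hi))]
  exact hspec
end Induced


section Gamma
variable (p q : ℕ)

theorem take_length : ((List.finRange (p + q)).take p).length = p := by simp

theorem take_getElem (i : ℕ) (hi : i < p) :
    ((List.finRange (p+q)).take p)[i]'(by simp; omega) = ⟨i, by omega⟩ := by simp

theorem mem_take_iff (x : Fin (p + q)) :
    x ∈ (List.finRange (p+q)).take p ↔ (x : ℕ) < p := by
  constructor
  · intro hx
    obtain ⟨i, hi, rfl⟩ := List.getElem_of_mem hx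
    rw [take_length] at hi
    rw [take_getElem p q i hi]
    exact hi
  · intro hx
    have : ((List.finRange (p+q)).take p)[(x:ℕ)]'(by simp; omega) = x := by simp
    exact this ▸ List.getElem_mem _

theorem drop_length : ((List.finRange (p + q)).drop p).length = q := by simp

theorem drop_getElem (i : ℕ) (hi : i < q) :
    ((List.finRange (p+q)).drop p)[i]'(by simp; omega) = ⟨p + i, by omega⟩ := by simp

theorem mem_drop_iff (x : Fin (p + q)) :
    x ∈ (List.finRange (p+q)).drop p ↔ p ≤ (x : ℕ) := by
  constructor
  · intro hx
    obtain ⟨i, hi, rfl⟩ := List.getElem_of_mem hx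
    rw [drop_length] at hi
    rw [drop_getElem p q i hi]
    simp
  · intro hx
    have hxq : (x : ℕ) - p < q := by omega
    have : ((List.finRange (p+q)).drop p)[(x:ℕ) - p]'(by simp; omega) = x := by
      rw [drop_getElem p q _ hxq]
      ext; simp; omega
    exact this ▸ List.getElem_mem _

theorem gammaExt_apply_val {x : Fin (p + q)} (hx : (x : ℕ) < p) :
    ((gammaExt p q x : Fin (p+q)) : ℕ) = ((x : ℕ) + 1) % p := by
  have hnd : ((List.finRange (p+q)).take p).Nodup := (List.nodup_finRange _).take
  have hform := List.formPerm_apply_getElem _ hnd (x : ℕ) (by simp; omega)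
  rw [take_getElem p q _ hx] at hform
  have hx' : (⟨(x:ℕ), x.isLt⟩ : Fin (p+q)) = x := rfl
  rw [hx'] at hform
  have hval : ∀ (j:ℕ) (hj : j < ((List.finRange (p+q)).take p).length),
      ((((List.finRange (p+q)).take p)[j]'hj : Fin (p+q)) : ℕ) = j := by
    intro j hj; simp
  rw [gammaExt, hform, hval, take_length]

theorem gammaExt_fix {x : Fin (p + q)} (hx : p ≤ (x : ℕ)) : gammaExt p q x = x :=
  List.formPerm_apply_of_notMem (by rw [mem_take_iff]; omega)

theorem gammaInt_apply_val {x : Fin (p + q)} (hx : p ≤ (x : ℕ)) :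
    ((gammaInt p q x : Fin (p+q)) : ℕ) = p + ((x : ℕ) - p + 1) % q := by
  have hq : 0 < q := by have := x.isLt; omega
  have hnd : ((List.finRange (p+q)).drop p).Nodup := (List.nodup_finRange _).drop
  have hform := List.formPerm_apply_getElem _ hnd ((x : ℕ) - p) (by simp; omega)
  have hx' : ((List.finRange (p+q)).drop p)[(x:ℕ) - p]'(by simp; omega) = x := by
    rw [drop_getElem p q _ (by have := x.isLt; omega)]
    ext; simp; omega
  rw [hx'] at hform
  have hval : ∀ (j:ℕ) (hj : j < ((List.finRange (p+q)).drop p).length),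
      ((((List.finRange (p+q)).drop p)[j]'hj : Fin (p+q)) : ℕ) = p + j := by
    intro j hj
    rw [drop_length] at hj
    rw [drop_getElem p q _ hj]
  rw [gammaInt, hform, hval, drop_length]

theorem gammaInt_fix {x : Fin (p + q)} (hx : (x : ℕ) < p) : gammaInt p q x = x :=
  List.formPerm_apply_of_notMem (by rw [mem_drop_iff]; omega)

theorem gammaExt_iterate_val (m : ℕ) {x : Fin (p + q)} (hx : (x : ℕ) < p) :
    (((⇑(gammaExt p q))^[m] x : Fin (p+q)) : ℕ) = ((x : ℕ) + m) % p := by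
  induction m with
  | zero => simpa using (Nat.mod_eq_of_lt hx).symm
  | succ m ih =>
    rw [Function.iterate_succ_apply']
    have hlt : (((⇑(gammaExt p q))^[m] x : Fin (p+q)) : ℕ) < p := by
      rw [ih]; exact Nat.mod_lt _ (by omega)
    rw [gammaExt_apply_val p q hlt, ih, Nat.mod_add_mod, ← Nat.add_assoc]

theorem gammaExt_reach {x y : Fin (p + q)} (hx : (x : ℕ) < p) (hy : (y : ℕ) < p) :
    ∃ m, (⇑(gammaExt p q))^[m] x = y := by
  refine ⟨(p - (x : ℕ)) + (y : ℕ), ?_⟩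
  ext
  rw [gammaExt_iterate_val p q _ hx]
  rw [show (x : ℕ) + ((p - (x : ℕ)) + (y : ℕ)) = p + (y:ℕ) by omega]
  rw [Nat.add_mod_left, Nat.mod_eq_of_lt hy]

theorem gammaInt_iterate_val (m : ℕ) {x : Fin (p + q)} (hx : p ≤ (x : ℕ)) :
    (((⇑(gammaInt p q))^[m] x : Fin (p+q)) : ℕ) = p + (((x : ℕ) - p) + m) % q := by
  have hq : 0 < q := by have := x.isLt; omega
  induction m with
  | zero =>
    have : ((x:ℕ) - p) % q = (x:ℕ) - p := Nat.mod_eq_of_lt (by have := x.isLt; omega)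
    simp [this]; omega
  | succ m ih =>
    rw [Function.iterate_succ_apply']
    have hle : p ≤ (((⇑(gammaInt p q))^[m] x : Fin (p+q)) : ℕ) := by rw [ih]; omega
    rw [gammaInt_apply_val p q hle, ih]
    congr 1
    rw [Nat.add_sub_cancel_left, Nat.mod_add_mod, ← Nat.add_assoc]

theorem gammaInt_reach {x y : Fin (p + q)} (hx : p ≤ (x : ℕ)) (hy : p ≤ (y : ℕ)) :
    ∃ m, (⇑(gammaInt p q))^[m] x = y := by
  have hq : 0 < q := by have := x.isLt; omega
  refine ⟨(q - ((x : ℕ) - p)) + ((y : ℕ) - p), ?_⟩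
  ext
  rw [gammaInt_iterate_val p q _ hx]
  rw [show ((x : ℕ) - p) + ((q - ((x:ℕ) - p)) + ((y:ℕ) - p)) = q + ((y:ℕ) - p) by
    have := x.isLt; omega]
  rw [Nat.add_mod_left, Nat.mod_eq_of_lt (by have := y.isLt; omega)]
  omega

theorem ext_int_disjoint {x : Fin (p + q)} (hx : x ∈ extSet p q) (hx' : x ∈ intSet p q) :
    False := by
  simp only [extSet, intSet, Set.mem_setOf_eq] at hx hx'
  omega

theorem ext_or_int (x : Fin (p + q)) : x ∈ extSet p q ∨ x ∈ intSet p q := by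
  simp only [extSet, intSet, Set.mem_setOf_eq]
  omega

end Gamma


section Main

noncomputable def blockOf {α : Type*} {π : Set (Set α)} (hpart : Setoid.IsPartition π)
    (x : α) : Set α := (hpart.2 x).exists.choose

theorem blockOf_mem {α : Type*} {π : Set (Set α)} (hpart : Setoid.IsPartition π) (x : α) :
    blockOf hpart x ∈ π ∧ x ∈ blockOf hpart x := (hpart.2 x).exists.choose_spec

theorem block_eq_blockOf {α : Type*} {π : Set (Set α)} (hpart : Setoid.IsPartition π)
    {B : Set α} {x : α} (hB : B ∈ π) (hx : x ∈ B) : B = blockOf hpart x :=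
  (hpart.2 x).unique ⟨hB, hx⟩ ⟨(blockOf_mem hpart x).1, (blockOf_mem hpart x).2⟩

theorem block_eq_block {α : Type*} {π : Set (Set α)} (hpart : Setoid.IsPartition π)
    {B C : Set α} {x : α} (hB : B ∈ π) (hC : C ∈ π) (hxB : x ∈ B) (hxC : x ∈ C) : B = C := by
  rw [block_eq_blockOf hpart hB hxB, block_eq_blockOf hpart hC hxC]

variable {p q : ℕ} {π : Set (Set (Fin (p + q)))} (hpart : Setoid.IsPartition π)
  {B₀ : Set (Fin (p + q))} (hB₀ : B₀ ∈ π)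
  (huniq : ∀ B ∈ π, ConnectingBlock p q B → B = B₀)

include huniq in
theorem nonconn_block {B : Set (Fin (p + q))} (hB : B ∈ π) (hne : B ≠ B₀) :
    (∀ x ∈ B, x ∈ extSet p q) ∨ (∀ x ∈ B, x ∈ intSet p q) := by
  by_contra hc
  push_neg at hc
  obtain ⟨⟨x, hxB, hx⟩, ⟨y, hyB, hy⟩⟩ := hc
  have hxi : x ∈ intSet p q := (ext_or_int p q x).resolve_left hx
  have hye : y ∈ extSet p q := (ext_or_int p q y).resolve_right hy
  exact hne (huniq B hB ⟨⟨y, hyB, hye⟩, ⟨x, hxB, hxi⟩⟩)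

open Classical in
/-- The standard annular permutation (as a raw function) determined by the jump points
`a ∈ B₀ ∩ ext` and `b ∈ B₀ ∩ int`. -/
noncomputable def Tfun (hpart : Setoid.IsPartition π) (B₀ : Set (Fin (p + q)))
    (a b : Fin (p + q)) (x : Fin (p + q)) : Fin (p + q) :=
  if x ∈ B₀ then
    if x = a then induced (⇑(gammaInt p q)) (B₀ ∩ intSet p q) b
    else if x = b then induced (⇑(gammaExt p q)) (B₀ ∩ extSet p q) a
    else if x ∈ extSet p q then induced (⇑(gammaExt p q)) (B₀ ∩ extSet p q) x
    else induced (⇑(gammaInt p q)) (B₀ ∩ intSet p q) x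
  else if x ∈ extSet p q then induced (⇑(gammaExt p q)) (blockOf hpart x) x
  else induced (⇑(gammaInt p q)) (blockOf hpart x) x

variable {a b : Fin (p + q)}

theorem Tfun_eq_a (haB : a ∈ B₀) :
    Tfun hpart B₀ a b a = induced (⇑(gammaInt p q)) (B₀ ∩ intSet p q) b := by
  rw [Tfun, if_pos haB, if_pos rfl]

theorem Tfun_eq_b (hbB : b ∈ B₀) (hab : a ≠ b) :
    Tfun hpart B₀ a b b = induced (⇑(gammaExt p q)) (B₀ ∩ extSet p q) a := by
  rw [Tfun, if_pos hbB, if_neg (Ne.symm hab), if_pos rfl]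

theorem Tfun_in_ext {x : Fin (p + q)} (hxB : x ∈ B₀) (hxa : x ≠ a) (hxb : x ≠ b)
    (hxe : x ∈ extSet p q) :
    Tfun hpart B₀ a b x = induced (⇑(gammaExt p q)) (B₀ ∩ extSet p q) x := by
  rw [Tfun, if_pos hxB, if_neg hxa, if_neg hxb, if_pos hxe]

theorem Tfun_in_int {x : Fin (p + q)} (hxB : x ∈ B₀) (hxa : x ≠ a) (hxb : x ≠ b)
    (hxi : x ∈ intSet p q) :
    Tfun hpart B₀ a b x = induced (⇑(gammaInt p q)) (B₀ ∩ intSet p q) x := by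
  rw [Tfun, if_pos hxB, if_neg hxa, if_neg hxb,
    if_neg (fun hc => ext_int_disjoint p q hc hxi)]

theorem Tfun_out_ext {x : Fin (p + q)} (hxB : x ∉ B₀) (hxe : x ∈ extSet p q) :
    Tfun hpart B₀ a b x = induced (⇑(gammaExt p q)) (blockOf hpart x) x := by
  rw [Tfun, if_neg hxB, if_pos hxe]

theorem Tfun_out_int {x : Fin (p + q)} (hxB : x ∉ B₀) (hxi : x ∈ intSet p q) :
    Tfun hpart B₀ a b x = induced (⇑(gammaInt p q)) (blockOf hpart x) x := by
  rw [Tfun, if_neg hxB, if_neg (fun hc => ext_int_disjoint p q hc hxi)]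

variable (ha : a ∈ B₀ ∩ extSet p q) (hb : b ∈ B₀ ∩ intSet p q)

include ha hb in
theorem Tfun_cases {x : Fin (p + q)} (hx : x ∈ B₀) :
    (x = a ∧ Tfun hpart B₀ a b x = induced (⇑(gammaInt p q)) (B₀ ∩ intSet p q) b) ∨
    (x = b ∧ Tfun hpart B₀ a b x = induced (⇑(gammaExt p q)) (B₀ ∩ extSet p q) a) ∨
    (x ≠ a ∧ x ≠ b ∧ x ∈ B₀ ∩ extSet p q ∧
      Tfun hpart B₀ a b x = induced (⇑(gammaExt p q)) (B₀ ∩ extSet p q) x) ∨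
    (x ≠ a ∧ x ≠ b ∧ x ∈ B₀ ∩ intSet p q ∧
      Tfun hpart B₀ a b x = induced (⇑(gammaInt p q)) (B₀ ∩ intSet p q) x) := by
  by_cases hxa : x = a
  · subst hxa; exact Or.inl ⟨rfl, Tfun_eq_a hpart ha.1⟩
  by_cases hxb : x = b
  · subst hxb
    refine Or.inr (Or.inl ⟨rfl, Tfun_eq_b hpart hb.1 ?_⟩)
    exact fun hc => ext_int_disjoint p q ha.2 (hc ▸ hb.2)
  rcases ext_or_int p q x with hxe | hxi
  · exact Or.inr (Or.inr (Or.inl ⟨hxa, hxb, ⟨hx, hxe⟩, Tfun_in_ext hpart hx hxa hxb hxe⟩))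
  · exact Or.inr (Or.inr (Or.inr ⟨hxa, hxb, ⟨hx, hxi⟩, Tfun_in_int hpart hx hxa hxb hxi⟩))

include hB₀ huniq ha hb in
theorem Tfun_mem {B : Set (Fin (p + q))} (hB : B ∈ π) {x : Fin (p + q)} (hx : x ∈ B) :
    Tfun hpart B₀ a b x ∈ B := by
  by_cases hxB : x ∈ B₀
  · have hBB : B = B₀ := block_eq_block hpart hB hB₀ hx hxB
    subst hBB
    rcases Tfun_cases hpart ha hb hxB with ⟨-, h⟩ | ⟨-, h⟩ | ⟨-, -, hm, h⟩ | ⟨-, -, hm, h⟩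
    · rw [h]; exact (induced_mem (gammaInt p q) hb).1
    · rw [h]; exact (induced_mem (gammaExt p q) ha).1
    · rw [h]; exact (induced_mem (gammaExt p q) hm).1
    · rw [h]; exact (induced_mem (gammaInt p q) hm).1
  · have hBB : B = blockOf hpart x := block_eq_blockOf hpart hB hx
    rcases ext_or_int p q x with hxe | hxi
    · rw [Tfun_out_ext hpart hxB hxe, hBB]
      exact induced_mem (gammaExt p q) (hBB ▸ hx)
    · rw [Tfun_out_int hpart hxB hxi, hBB]
      exact induced_mem (gammaInt p q) (hBB ▸ hx)

include hB₀ huniq ha hb in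
theorem Tfun_inj : Function.Injective (Tfun hpart B₀ a b) := by
  intro x y hxy
  have hxBl := blockOf_mem hpart x
  have hyBl := blockOf_mem hpart y
  have hTx : Tfun hpart B₀ a b x ∈ blockOf hpart x :=
    Tfun_mem hpart hB₀ huniq ha hb hxBl.1 hxBl.2
  have hTy : Tfun hpart B₀ a b y ∈ blockOf hpart y :=
    Tfun_mem hpart hB₀ huniq ha hb hyBl.1 hyBl.2
  have hBeq : blockOf hpart x = blockOf hpart y :=
    block_eq_block hpart hxBl.1 hyBl.1 hTx (hxy ▸ hTy)
  -- helpers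
  have hEinj : ∀ {u v : Fin (p+q)}, u ∈ B₀ ∩ extSet p q → v ∈ B₀ ∩ extSet p q →
      induced (⇑(gammaExt p q)) (B₀ ∩ extSet p q) u =
      induced (⇑(gammaExt p q)) (B₀ ∩ extSet p q) v → u = v :=
    fun hu hv h => induced_injOn (gammaExt p q) hu hv h
  have hIinj : ∀ {u v : Fin (p+q)}, u ∈ B₀ ∩ intSet p q → v ∈ B₀ ∩ intSet p q →
      induced (⇑(gammaInt p q)) (B₀ ∩ intSet p q) u =
      induced (⇑(gammaInt p q)) (B₀ ∩ intSet p q) v → u = v :=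
    fun hu hv h => induced_injOn (gammaInt p q) hu hv h
  have hEI : ∀ {u v : Fin (p+q)}, u ∈ B₀ ∩ extSet p q → v ∈ B₀ ∩ intSet p q →
      induced (⇑(gammaExt p q)) (B₀ ∩ extSet p q) u ≠
      induced (⇑(gammaInt p q)) (B₀ ∩ intSet p q) v := by
    intro u v hu hv hc
    exact ext_int_disjoint p q (induced_mem (gammaExt p q) hu).2
      (hc ▸ (induced_mem (gammaInt p q) hv).2)
  by_cases hxB : x ∈ B₀
  · have hyB : y ∈ B₀ := by
      have h1 : B₀ = blockOf hpart x := block_eq_blockOf hpart hB₀ hxB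
      rw [h1, hBeq]; exact hyBl.2
    rcases Tfun_cases hpart ha hb hxB with ⟨hx1, hx2⟩ | ⟨hx1, hx2⟩ | ⟨hx1, hx1', hxm, hx2⟩ |
        ⟨hx1, hx1', hxm, hx2⟩ <;>
      rcases Tfun_cases hpart ha hb hyB with ⟨hy1, hy2⟩ | ⟨hy1, hy2⟩ | ⟨hy1, hy1', hym, hy2⟩ |
        ⟨hy1, hy1', hym, hy2⟩ <;>
      rw [hx2, hy2] at hxy
    · rw [hx1, hy1]
    · exact absurd hxy.symm (hEI ha hb)
    · exact absurd hxy.symm (hEI hym hb)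
    · exact absurd (hIinj hb hym hxy).symm hy1'
    · exact absurd hxy (hEI ha hb)
    · rw [hx1, hy1]
    · exact absurd (hEinj ha hym hxy).symm hy1
    · exact absurd hxy (hEI ha hym)
    · exact absurd hxy (hEI hxm hb)
    · exact absurd (hEinj hxm ha hxy) hx1
    · exact hEinj hxm hym hxy
    · exact absurd hxy (hEI hxm hym)
    · exact absurd (hIinj hxm hb hxy) hx1'
    · exact absurd hxy.symm (hEI ha hxm)
    · exact absurd hxy.symm (hEI hym hxm)
    · exact hIinj hxm hym hxy
  · have hyB : y ∉ B₀ := by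
      intro hyB
      have h1 : B₀ = blockOf hpart y := block_eq_blockOf hpart hB₀ hyB
      exact hxB (by rw [h1, ← hBeq] at *; exact hxBl.2)
    have hblk : blockOf hpart x ≠ B₀ := fun hc => hxB (hc ▸ hxBl.2)
    have hyblk : y ∈ blockOf hpart x := hBeq ▸ hyBl.2
    rcases nonconn_block huniq hxBl.1 hblk with hsub | hsub
    · have hxe := hsub x hxBl.2
      have hye := hsub y hyblk
      rw [Tfun_out_ext hpart hxB hxe, Tfun_out_ext hpart hyB hye, ← hBeq] at hxy
      exact induced_injOn (gammaExt p q) hxBl.2 hyblk hxy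
    · have hxi := hsub x hxBl.2
      have hyi := hsub y hyblk
      rw [Tfun_out_int hpart hxB hxi, Tfun_out_int hpart hyB hyi, ← hBeq] at hxy
      exact induced_injOn (gammaInt p q) hxBl.2 hyblk hxy

include hB₀ huniq ha hb in
theorem Tfun_bij : Function.Bijective (Tfun hpart B₀ a b) :=
  Finite.injective_iff_bijective.mp (Tfun_inj hpart hB₀ huniq ha hb)

theorem sameCycle_iff_iterate {α : Type*} [Finite α] (σ : Equiv.Perm α) (x y : α) :
    σ.SameCycle x y ↔ ∃ k : ℕ, (⇑σ)^[k] x = y := by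
  constructor
  · intro h
    obtain ⟨i, -, hi⟩ := h.exists_pow_eq'
    exact ⟨i, by rw [← Equiv.Perm.coe_pow]; exact hi⟩
  · rintro ⟨k, hk⟩
    exact ⟨(k : ℤ), by rw [zpow_natCast, Equiv.Perm.coe_pow]; exact hk⟩

theorem indE_reach {x y : Fin (p+q)} (hx : x ∈ B₀ ∩ extSet p q) (hy : y ∈ B₀ ∩ extSet p q) :
    ∃ k, (induced (⇑(gammaExt p q)) (B₀ ∩ extSet p q))^[k] x = y := by
  obtain ⟨m, hm⟩ := gammaExt_reach p q hx.2 hy.2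
  obtain ⟨k, hk⟩ := induced_reach (gammaExt p q) hx m (by rw [hm]; exact hy)
  exact ⟨k, by rw [hk, hm]⟩

theorem indI_reach {x y : Fin (p+q)} (hx : x ∈ B₀ ∩ intSet p q) (hy : y ∈ B₀ ∩ intSet p q) :
    ∃ k, (induced (⇑(gammaInt p q)) (B₀ ∩ intSet p q))^[k] x = y := by
  obtain ⟨m, hm⟩ := gammaInt_reach p q hx.2 hy.2
  obtain ⟨k, hk⟩ := induced_reach (gammaInt p q) hx m (by rw [hm]; exact hy)
  exact ⟨k, by rw [hk, hm]⟩

include hB₀ huniq ha hb in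
theorem Tfun_reach {B : Set (Fin (p + q))} (hB : B ∈ π) {x y : Fin (p + q)}
    (hx : x ∈ B) (hy : y ∈ B) : ∃ k, (Tfun hpart B₀ a b)^[k] x = y := by
  set T := Tfun hpart B₀ a b with hT
  set E := B₀ ∩ extSet p q with hE
  set I := B₀ ∩ intSet p q with hI
  set gE := induced (⇑(gammaExt p q)) E with hgE
  set gI := induced (⇑(gammaInt p q)) I with hgI
  have hRtrans : ∀ {u v w : Fin (p+q)}, (∃ k, T^[k] u = v) → (∃ k, T^[k] v = w) →
      ∃ k, T^[k] u = w := by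
    rintro u v w ⟨k1, h1⟩ ⟨k2, h2⟩
    exact ⟨k2 + k1, by rw [Function.iterate_add_apply, h1, h2]⟩
  have hagE : ∀ w ∈ E, w ≠ a → T w = gE w := by
    intro w hw hwa
    exact Tfun_in_ext hpart hw.1 hwa (fun hc => ext_int_disjoint p q hw.2 (hc ▸ hb.2)) hw.2
  have hagI : ∀ w ∈ I, w ≠ b → T w = gI w := by
    intro w hw hwb
    exact Tfun_in_int hpart hw.1 (fun hc => ext_int_disjoint p q ha.2 (hc ▸ hw.2)) hwb hw.2
  have hEinv : ∀ w ∈ E, gE w ∈ E := fun w hw => induced_mem (gammaExt p q) hw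
  have hIinv : ∀ w ∈ I, gI w ∈ I := fun w hw => induced_mem (gammaInt p q) hw
  have c1 : ∀ w ∈ E, ∃ k, T^[k] w = a := fun w hw =>
    reach_special hagE hEinv hw (indE_reach hw ha)
  have c2 : ∀ w ∈ I, ∃ k, T^[k] w = b := fun w hw =>
    reach_special hagI hIinv hw (indI_reach hw hb)
  have c3 : ∀ w ∈ I, ∃ k, T^[k] a = w := by
    intro w hw
    obtain ⟨k, hk⟩ := reach_from_special hagI hIinv hb hw (indI_reach (hIinv b hb) hw)
    refine ⟨k + 1, ?_⟩
    rw [Function.iterate_succ_apply, hT, Tfun_eq_a hpart ha.1]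
    exact hk
  have c4 : ∀ w ∈ E, ∃ k, T^[k] b = w := by
    intro w hw
    obtain ⟨k, hk⟩ := reach_from_special hagE hEinv ha hw (indE_reach (hEinv a ha) hw)
    refine ⟨k + 1, ?_⟩
    have hab : a ≠ b := fun hc => ext_int_disjoint p q ha.2 (hc ▸ hb.2)
    rw [Function.iterate_succ_apply, hT, Tfun_eq_b hpart hb.1 hab]
    exact hk
  by_cases hBB : B = B₀
  · subst hBB
    rcases ext_or_int p q x with hxe | hxi <;> rcases ext_or_int p q y with hye | hyi
    · exact hRtrans (c1 x ⟨hx, hxe⟩) (hRtrans (c3 b hb) (c4 y ⟨hy, hye⟩))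
    · exact hRtrans (c1 x ⟨hx, hxe⟩) (c3 y ⟨hy, hyi⟩)
    · exact hRtrans (c2 x ⟨hx, hxi⟩) (c4 y ⟨hy, hye⟩)
    · exact hRtrans (c2 x ⟨hx, hxi⟩) (hRtrans (c4 a ha) (c3 y ⟨hy, hyi⟩))
  · have hnotB₀ : ∀ w ∈ B, w ∉ B₀ := by
      intro w hw hc
      exact hBB (block_eq_block hpart hB hB₀ hw hc)
    rcases nonconn_block huniq hB hBB with hsub | hsub
    · set g := induced (⇑(gammaExt p q)) B with hg
      have hginv : ∀ w ∈ B, g w ∈ B := fun w hw => induced_mem (gammaExt p q) hw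
      have hag : ∀ w ∈ B, T w = g w := by
        intro w hw
        rw [hT, Tfun_out_ext hpart (hnotB₀ w hw) (hsub w hw),
          ← block_eq_blockOf hpart hB hw]
      obtain ⟨m, hm⟩ := gammaExt_reach p q (Set.mem_setOf_eq ▸ hsub x hx)
        (Set.mem_setOf_eq ▸ hsub y hy)
      obtain ⟨k, hk⟩ := induced_reach (gammaExt p q) hx m (by rw [hm]; exact hy)
      exact ⟨k, (iterate_agree (k := k) (fun i _ => hag _ (iterate_mem hginv hx i))).trans
        (hk.trans hm)⟩
    · set g := induced (⇑(gammaInt p q)) B with hg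
      have hginv : ∀ w ∈ B, g w ∈ B := fun w hw => induced_mem (gammaInt p q) hw
      have hag : ∀ w ∈ B, T w = g w := by
        intro w hw
        rw [hT, Tfun_out_int hpart (hnotB₀ w hw) (hsub w hw),
          ← block_eq_blockOf hpart hB hw]
      obtain ⟨m, hm⟩ := gammaInt_reach p q (Set.mem_setOf_eq ▸ hsub x hx)
        (Set.mem_setOf_eq ▸ hsub y hy)
      obtain ⟨k, hk⟩ := induced_reach (gammaInt p q) hx m (by rw [hm]; exact hy)
      exact ⟨k, (iterate_agree (k := k) (fun i _ => hag _ (iterate_mem hginv hx i))).trans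
        (hk.trans hm)⟩

/-- First-return lemma: if `x₀ ∈ B₀ ∩ U` maps into `V`, and `z` is the unique point of
`B₀ ∩ V` mapping back into `U`, then the first return of `x₀` to `B₀ ∩ U` is `T z`. -/
theorem first_return_gen (T : Equiv.Perm (Fin (p + q))) {U V : Set (Fin (p + q))}
    (hinv : ∀ w ∈ B₀, T w ∈ B₀) (hdisj : ∀ x, x ∈ U → x ∈ V → False)
    (hcover : ∀ x, x ∈ U ∨ x ∈ V) {x₀ z : Fin (p + q)}
    (hx₀ : x₀ ∈ B₀ ∩ U) (hTx₀ : T x₀ ∈ V)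
    (hexit : ∀ w ∈ B₀ ∩ V, T w ∈ U → w = z) :
    induced (⇑T) (B₀ ∩ U) x₀ = T z := by
  obtain ⟨k, hk, hkm, heq, hmin⟩ := induced_spec (⇑T) (B₀ ∩ U) (exists_return T hx₀)
  have hk1 : k ≠ 1 := by
    intro hc
    rw [hc] at hkm
    simp only [Function.iterate_one] at hkm
    exact hdisj _ hkm.2 hTx₀
  have hk2 : 2 ≤ k := by omega
  set w := (⇑T)^[k-1] x₀ with hw
  have hwB : w ∈ B₀ := iterate_mem (fun u hu => hinv u hu) hx₀.1 (k-1)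
  have hwnU : w ∉ B₀ ∩ U := hmin (k-1) (by omega) (by omega)
  have hwV : w ∈ V := (hcover w).resolve_left (fun hc => hwnU ⟨hwB, hc⟩)
  have hTw : T w = (⇑T)^[k] x₀ := by
    have h1 : (⇑T)^[(k-1)+1] x₀ = T ((⇑T)^[k-1] x₀) := Function.iterate_succ_apply' _ _ _
    rw [show (k-1)+1 = k by omega] at h1
    rw [hw, ← h1]
  have hwz : w = z := hexit w ⟨hwB, hwV⟩ (hTw ▸ hkm.2)
  rw [heq, ← hTw, hwz]

include hB₀ huniq ha hb in
theorem Tfun_bij' : Function.Bijective (Tfun hpart B₀ a b) :=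
  Tfun_bij hpart hB₀ huniq ha hb

/-- The standard annular permutation determined by the jump points. -/
noncomputable def TPerm : Equiv.Perm (Fin (p + q)) :=
  Equiv.ofBijective _ (Tfun_bij hpart hB₀ huniq ha hb)

theorem TPerm_coe :
    ⇑(TPerm hpart hB₀ huniq ha hb) = Tfun hpart B₀ a b := rfl

include hB₀ huniq ha hb in
theorem TPerm_orbits : {A | IsOrbit (TPerm hpart hB₀ huniq ha hb) A} = π := by
  set T := TPerm hpart hB₀ huniq ha hb with hT
  have key : ∀ B ∈ π, ∀ a₀ ∈ B, {y | T.SameCycle a₀ y} = B := by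
    intro B hB a₀ ha₀
    ext y
    simp only [Set.mem_setOf_eq]
    rw [sameCycle_iff_iterate]
    constructor
    · rintro ⟨k, hk⟩
      rw [← hk]
      exact iterate_mem (fun w hw => Tfun_mem hpart hB₀ huniq ha hb hB hw) ha₀ k
    · intro hy
      exact Tfun_reach hpart hB₀ huniq ha hb hB ha₀ hy
  ext A
  simp only [Set.mem_setOf_eq]
  constructor
  · rintro ⟨a₀, rfl⟩
    have h := blockOf_mem hpart a₀
    rw [key _ h.1 _ h.2]
    exact h.1
  · intro hA
    have hne : A.Nonempty := Set.nonempty_iff_ne_empty.mpr (fun hc => hpart.1 (hc ▸ hA))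
    obtain ⟨a₀, ha₀⟩ := hne
    exact ⟨a₀, (key A hA a₀ ha₀).symm⟩

include hpart hB₀ huniq ha hb in
theorem TPerm_standard : AnnStandard p q (TPerm hpart hB₀ huniq ha hb) := by
  set Tp := TPerm hpart hB₀ huniq ha hb with hTp
  have hco : ⇑Tp = Tfun hpart B₀ a b := rfl
  have horb : {A | IsOrbit Tp A} = π := TPerm_orbits hpart hB₀ huniq ha hb
  have horbmem : ∀ A, IsOrbit Tp A → A ∈ π := by
    intro A hA
    rw [← horb]
    exact hA
  have hinv : ∀ w ∈ B₀, Tp w ∈ B₀ := fun w hw => Tfun_mem hpart hB₀ huniq ha hb hB₀ hw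
  have hab : a ≠ b := fun hc => ext_int_disjoint p q ha.2 (hc ▸ hb.2)
  have hTpa : Tp a = induced (⇑(gammaInt p q)) (B₀ ∩ intSet p q) b := by
    rw [hco]; exact Tfun_eq_a hpart ha.1
  have hTpb : Tp b = induced (⇑(gammaExt p q)) (B₀ ∩ extSet p q) a := by
    rw [hco]; exact Tfun_eq_b hpart hb.1 hab
  have hexitI : ∀ w ∈ B₀ ∩ intSet p q, Tp w ∈ extSet p q → w = b := by
    intro w hw hTw
    by_contra hwb
    have hwa : w ≠ a := fun hc => ext_int_disjoint p q ha.2 (hc ▸ hw.2)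
    have h1 : Tp w = induced (⇑(gammaInt p q)) (B₀ ∩ intSet p q) w := by
      rw [hco]; exact Tfun_in_int hpart hw.1 hwa hwb hw.2
    exact ext_int_disjoint p q hTw (h1 ▸ (induced_mem (gammaInt p q) hw).2)
  have hexitE : ∀ w ∈ B₀ ∩ extSet p q, Tp w ∈ intSet p q → w = a := by
    intro w hw hTw
    by_contra hwa
    have hwb : w ≠ b := fun hc => ext_int_disjoint p q hw.2 (hc ▸ hb.2)
    have h1 : Tp w = induced (⇑(gammaExt p q)) (B₀ ∩ extSet p q) w := by
      rw [hco]; exact Tfun_in_ext hpart hw.1 hwa hwb hw.2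
    exact ext_int_disjoint p q (h1 ▸ (induced_mem (gammaExt p q) hw).2) hTw
  constructor
  · intro A hA
    have hAπ : A ∈ π := horbmem A hA
    by_cases hAB : A = B₀
    · subst hAB
      constructor
      · intro x hx
        by_cases hxa : x = a
        · subst hxa
          have h1 : induced (⇑Tp) (A ∩ extSet p q) x = Tp b :=
            first_return_gen Tp hinv (fun u hu hu' => ext_int_disjoint p q hu hu')
              (ext_or_int p q) hx (hTpa ▸ (induced_mem (gammaInt p q) hb).2) hexitI
          rw [h1, hTpb]
        · have hxb : x ≠ b := fun hc => ext_int_disjoint p q hx.2 (hc ▸ hb.2)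
          have hTx : Tp x = induced (⇑(gammaExt p q)) (A ∩ extSet p q) x := by
            rw [hco]; exact Tfun_in_ext hpart hx.1 hxa hxb hx.2
          have hmem : Tp x ∈ A ∩ extSet p q := hTx ▸ induced_mem (gammaExt p q) hx
          rw [induced_apply_of_apply_mem _ _ hmem, hTx]
      · intro x hx
        by_cases hxb : x = b
        · subst hxb
          have h1 : induced (⇑Tp) (A ∩ intSet p q) x = Tp a :=
            first_return_gen Tp hinv (fun u hu hu' => ext_int_disjoint p q hu' hu)
              (fun u => (ext_or_int p q u).symm) hx
              (hTpb ▸ (induced_mem (gammaExt p q) ha).2) hexitE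
          rw [h1, hTpa]
        · have hxa : x ≠ a := fun hc => ext_int_disjoint p q ha.2 (hc ▸ hx.2)
          have hTx : Tp x = induced (⇑(gammaInt p q)) (A ∩ intSet p q) x := by
            rw [hco]; exact Tfun_in_int hpart hx.1 hxa hxb hx.2
          have hmem : Tp x ∈ A ∩ intSet p q := hTx ▸ induced_mem (gammaInt p q) hx
          rw [induced_apply_of_apply_mem _ _ hmem, hTx]
    · have hnB₀ : ∀ w ∈ A, w ∉ B₀ := fun w hw hc =>
        hAB (block_eq_block hpart hAπ hB₀ hw hc)
      rcases nonconn_block huniq hAπ hAB with hsub | hsub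
      · constructor
        · intro x hx
          have hblk : blockOf hpart x = A := (block_eq_blockOf hpart hAπ hx.1).symm
          have hTx : Tp x = induced (⇑(gammaExt p q)) (A ∩ extSet p q) x := by
            rw [hco, Tfun_out_ext hpart (hnB₀ x hx.1) hx.2, hblk]
            congr 1
            exact (Set.inter_eq_left.mpr hsub).symm
          have hmem : Tp x ∈ A ∩ extSet p q := hTx ▸ induced_mem (gammaExt p q) hx
          rw [induced_apply_of_apply_mem _ _ hmem, hTx]
        · intro x hx
          exact absurd (hsub x hx.1) (fun hc => ext_int_disjoint p q hc hx.2)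
      · constructor
        · intro x hx
          exact absurd (hsub x hx.1) (fun hc => ext_int_disjoint p q hx.2 hc)
        · intro x hx
          have hblk : blockOf hpart x = A := (block_eq_blockOf hpart hAπ hx.1).symm
          have hTx : Tp x = induced (⇑(gammaInt p q)) (A ∩ intSet p q) x := by
            rw [hco, Tfun_out_int hpart (hnB₀ x hx.1) hx.2, hblk]
            congr 1
            exact (Set.inter_eq_left.mpr hsub).symm
          have hmem : Tp x ∈ A ∩ intSet p q := hTx ▸ induced_mem (gammaInt p q) hx
          rw [induced_apply_of_apply_mem _ _ hmem, hTx]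
  · intro A hA hne1 hne2
    have hAπ : A ∈ π := horbmem A hA
    have hAB : A = B₀ := huniq A hAπ ⟨hne1, hne2⟩
    subst hAB
    constructor
    · exact ⟨a, ⟨ha, hTpa ▸ (induced_mem (gammaInt p q) hb).2⟩,
        fun w ⟨hw, hw'⟩ => hexitE w hw hw'⟩
    · exact ⟨b, ⟨hb, hTpb ▸ (induced_mem (gammaExt p q) ha).2⟩,
        fun w ⟨hw, hw'⟩ => hexitI w hw hw'⟩

include hpart hB₀ huniq in
theorem std_eq_TPerm (hconn : ConnectingBlock p q B₀) (τ : Equiv.Perm (Fin (p + q)))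
    (hstd : AnnStandard p q τ) (horb : {A | IsOrbit τ A} = π) :
    ∃ (a' b' : Fin (p + q)) (ha' : a' ∈ B₀ ∩ extSet p q) (hb' : b' ∈ B₀ ∩ intSet p q),
      τ = TPerm hpart hB₀ huniq ha' hb' := by
  have horbmem : ∀ B ∈ π, IsOrbit τ B := by
    intro B hB
    rw [← horb] at hB
    exact hB
  have horbB₀ : IsOrbit τ B₀ := horbmem B₀ hB₀
  have hinvB : ∀ B ∈ π, ∀ w ∈ B, τ w ∈ B := by
    intro B hB w hw
    obtain ⟨c, rfl⟩ := horbmem B hB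
    exact Equiv.Perm.SameCycle.trans hw ⟨1, by simp⟩
  obtain ⟨hne1, hne2⟩ := hconn
  obtain ⟨⟨a', ⟨haE, haI⟩, hauniq⟩, ⟨b', ⟨hbI, hbE⟩, hbuniq⟩⟩ :=
    hstd.2 B₀ horbB₀ hne1 hne2
  have hexitE : ∀ w ∈ B₀ ∩ extSet p q, τ w ∈ intSet p q → w = a' :=
    fun w hw hw' => hauniq w ⟨hw, hw'⟩
  have hexitI : ∀ w ∈ B₀ ∩ intSet p q, τ w ∈ extSet p q → w = b' :=
    fun w hw hw' => hbuniq w ⟨hw, hw'⟩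
  have hab : a' ≠ b' := fun hc => ext_int_disjoint p q haE.2 (hc ▸ hbI.2)
  refine ⟨a', b', haE, hbI, ?_⟩
  apply Equiv.ext
  intro x
  show τ x = Tfun hpart B₀ a' b' x
  by_cases hxB : x ∈ B₀
  · by_cases hxa : x = a'
    · subst hxa
      rw [Tfun_eq_a hpart haE.1]
      have h1 : induced (⇑τ) (B₀ ∩ intSet p q) b' = τ x :=
        first_return_gen τ (hinvB B₀ hB₀) (fun u hu hu' => ext_int_disjoint p q hu' hu)
          (fun u => (ext_or_int p q u).symm) hbI hbE hexitE
      have h2 : induced (⇑τ) (B₀ ∩ intSet p q) b' =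
          induced (⇑(gammaInt p q)) (B₀ ∩ intSet p q) b' :=
        (hstd.1 B₀ horbB₀).2 b' hbI
      rw [← h1, h2]
    · by_cases hxb : x = b'
      · subst hxb
        rw [Tfun_eq_b hpart hbI.1 hab]
        have h1 : induced (⇑τ) (B₀ ∩ extSet p q) a' = τ x :=
          first_return_gen τ (hinvB B₀ hB₀) (fun u hu hu' => ext_int_disjoint p q hu hu')
            (ext_or_int p q) haE haI hexitI
        have h2 : induced (⇑τ) (B₀ ∩ extSet p q) a' =
            induced (⇑(gammaExt p q)) (B₀ ∩ extSet p q) a' :=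
          (hstd.1 B₀ horbB₀).1 a' haE
        rw [← h1, h2]
      · rcases ext_or_int p q x with hxe | hxi
        · rw [Tfun_in_ext hpart hxB hxa hxb hxe]
          have hτB : τ x ∈ B₀ := hinvB B₀ hB₀ x hxB
          have hτe : τ x ∈ extSet p q := by
            rcases ext_or_int p q (τ x) with h | h
            · exact h
            · exact absurd (hexitE x ⟨hxB, hxe⟩ h) hxa
          have h1 : τ x = induced (⇑τ) (B₀ ∩ extSet p q) x :=
            (induced_apply_of_apply_mem (⇑τ) (B₀ ∩ extSet p q) ⟨hτB, hτe⟩).symm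
          rw [h1, (hstd.1 B₀ horbB₀).1 x ⟨hxB, hxe⟩]
        · rw [Tfun_in_int hpart hxB hxa hxb hxi]
          have hτB : τ x ∈ B₀ := hinvB B₀ hB₀ x hxB
          have hτi : τ x ∈ intSet p q := by
            rcases ext_or_int p q (τ x) with h | h
            · exact absurd (hexitI x ⟨hxB, hxi⟩ h) hxb
            · exact h
          have h1 : τ x = induced (⇑τ) (B₀ ∩ intSet p q) x :=
            (induced_apply_of_apply_mem (⇑τ) (B₀ ∩ intSet p q) ⟨hτB, hτi⟩).symm
          rw [h1, (hstd.1 B₀ horbB₀).2 x ⟨hxB, hxi⟩]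
  · have hxBl := blockOf_mem hpart x
    have hBne : blockOf hpart x ≠ B₀ := fun hc => hxB (hc ▸ hxBl.2)
    have hτx : τ x ∈ blockOf hpart x := hinvB _ hxBl.1 x hxBl.2
    rcases nonconn_block huniq hxBl.1 hBne with hsub | hsub
    · rw [Tfun_out_ext hpart hxB (hsub x hxBl.2)]
      have hinter : blockOf hpart x ∩ extSet p q = blockOf hpart x :=
        Set.inter_eq_left.mpr hsub
      have h1 : τ x = induced (⇑τ) (blockOf hpart x ∩ extSet p q) x :=
        (induced_apply_of_apply_mem (⇑τ) _ (hinter.symm ▸ hτx)).symm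
      rw [h1, (hstd.1 _ (horbmem _ hxBl.1)).1 x ⟨hxBl.2, hsub x hxBl.2⟩, hinter]
    · rw [Tfun_out_int hpart hxB (hsub x hxBl.2)]
      have hinter : blockOf hpart x ∩ intSet p q = blockOf hpart x :=
        Set.inter_eq_left.mpr hsub
      have h1 : τ x = induced (⇑τ) (blockOf hpart x ∩ intSet p q) x :=
        (induced_apply_of_apply_mem (⇑τ) _ (hinter.symm ▸ hτx)).symm
      rw [h1, (hstd.1 _ (horbmem _ hxBl.1)).2 x ⟨hxBl.2, hsub x hxBl.2⟩, hinter]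

include hpart hB₀ huniq in
theorem TPerm_inj_pairs {a1 b1 a2 b2 : Fin (p + q)}
    (h1 : a1 ∈ B₀ ∩ extSet p q) (h1' : b1 ∈ B₀ ∩ intSet p q)
    (h2 : a2 ∈ B₀ ∩ extSet p q) (h2' : b2 ∈ B₀ ∩ intSet p q)
    (heq : TPerm hpart hB₀ huniq h1 h1' = TPerm hpart hB₀ huniq h2 h2') :
    a1 = a2 ∧ b1 = b2 := by
  have hfeq : Tfun hpart B₀ a1 b1 = Tfun hpart B₀ a2 b2 := by
    rw [← TPerm_coe hpart hB₀ huniq h1 h1', ← TPerm_coe hpart hB₀ huniq h2 h2', heq]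
  have haa : a1 = a2 := by
    by_contra hne
    have e1 : Tfun hpart B₀ a1 b1 a2 =
        induced (⇑(gammaExt p q)) (B₀ ∩ extSet p q) a2 :=
      Tfun_in_ext hpart h2.1 (Ne.symm hne)
        (fun hc => ext_int_disjoint p q h2.2 (hc ▸ h1'.2)) h2.2
    have e2 : Tfun hpart B₀ a2 b2 a2 =
        induced (⇑(gammaInt p q)) (B₀ ∩ intSet p q) b2 :=
      Tfun_eq_a hpart h2.1
    rw [hfeq, e2] at e1
    exact ext_int_disjoint p q (induced_mem (gammaExt p q) h2).2
      (e1 ▸ (induced_mem (gammaInt p q) h2').2)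
  subst haa
  refine ⟨rfl, ?_⟩
  have e3 : Tfun hpart B₀ a1 b1 a1 = Tfun hpart B₀ a1 b2 a1 := by rw [hfeq]
  rw [Tfun_eq_a hpart h1.1, Tfun_eq_a hpart h1.1] at e3
  exact induced_injOn (gammaInt p q) h1' h2' e3

end Main

theorem ncard_prod' {α : Type*} [Fintype α] (s t : Set α) :
    (s ×ˢ t).ncard = s.ncard * t.ncard := by
  classical
  rw [Set.ncard_eq_toFinset_card', Set.ncard_eq_toFinset_card', Set.ncard_eq_toFinset_card',
    Set.toFinset_prod, Finset.card_product]



/-- Proposition 4.6 1°: if `π` is a partition of `[p+q]` with exactly one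
`(p,q)`-connecting block `B₀`, then the number of permutations of `[p+q]` which are
standard in `(p,q)`-annular sense and whose partition into orbits equals `π` is
`card(B₀ ∩ {1,…,p}) · card(B₀ ∩ {p+1,…,p+q})`. -/
theorem stmt_8 (p q : ℕ) (hp : 0 < p) (hq : 0 < q) (π : Set (Set (Fin (p + q))))
    (hpart : Setoid.IsPartition π) (B₀ : Set (Fin (p + q))) (hB₀ : B₀ ∈ π)
    (hconn : ConnectingBlock p q B₀)
    (huniq : ∀ B ∈ π, ConnectingBlock p q B → B = B₀) :
    Set.ncard {τ : Equiv.Perm (Fin (p + q)) | AnnStandard p q τ ∧ {A | IsOrbit τ A} = π} =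
      (B₀ ∩ extSet p q).ncard * (B₀ ∩ intSet p q).ncard := by
  classical
  set F : Fin (p + q) × Fin (p + q) → Equiv.Perm (Fin (p + q)) := fun x =>
    if h : x.1 ∈ B₀ ∩ extSet p q ∧ x.2 ∈ B₀ ∩ intSet p q then
      TPerm hpart hB₀ huniq h.1 h.2 else 1 with hF
  have himg : {τ : Equiv.Perm (Fin (p + q)) | AnnStandard p q τ ∧ {A | IsOrbit τ A} = π} =
      F '' ((B₀ ∩ extSet p q) ×ˢ (B₀ ∩ intSet p q)) := by
    ext τ
    simp only [Set.mem_setOf_eq, Set.mem_image, Set.mem_prod]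
    constructor
    · rintro ⟨hstd, horb⟩
      obtain ⟨a', b', ha', hb', rfl⟩ := std_eq_TPerm hpart hB₀ huniq hconn _ hstd horb
      refine ⟨(a', b'), ⟨ha', hb'⟩, ?_⟩
      rw [hF]
      simp only
      rw [dif_pos ⟨ha', hb'⟩]
    · rintro ⟨⟨a', b'⟩, ⟨ha', hb'⟩, rfl⟩
      rw [hF]
      simp only
      rw [dif_pos ⟨ha', hb'⟩]
      exact ⟨TPerm_standard hpart hB₀ huniq ha' hb', TPerm_orbits hpart hB₀ huniq ha' hb'⟩
  have hinjF : Set.InjOn F ((B₀ ∩ extSet p q) ×ˢ (B₀ ∩ intSet p q)) := by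
    rintro ⟨a1, b1⟩ hm1 ⟨a2, b2⟩ hm2 heq
    obtain ⟨h1, h1'⟩ := hm1
    obtain ⟨h2, h2'⟩ := hm2
    rw [hF] at heq
    simp only at heq
    rw [dif_pos ⟨h1, h1'⟩, dif_pos ⟨h2, h2'⟩] at heq
    obtain ⟨e1, e2⟩ := TPerm_inj_pairs hpart hB₀ huniq h1 h1' h2 h2' heq
    simp only [Prod.mk.injEq]
    exact ⟨e1, e2⟩
  rw [himg, Set.ncard_image_of_injOn hinjF, ncard_prod']
end

section
/- Let p and q be positive integers. The set S_ann-nc(p,q) is invariant under conjugation with γ_ext and with γ_int: if τ ∈ S_ann-nc(p,q) then γ_ext·τ·γ_ext⁻¹ ∈ S_ann-nc(p,q) and γ_int·τ·γ_int⁻¹ ∈ S_ann-nc(p,q). -/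
/-! Conjugation by a permutation `g` transports orbits, induced permutations and hence all the
data defining `S_ann-nc(p,q)` along `g`. If `g` preserves the two circles and commutes with
`γ_ext` and `γ_int`, it fixes `γ` and sends `λ_{x,y}` to `λ_{g x, g y}`, so it maps crossing
patterns of `τ` to crossing patterns of `g τ g⁻¹`. Such symmetries form a group containing
`γ_ext` and `γ_int`; applying this to `g⁻¹` pulls crossing patterns back. -/

open Function

section Induced

variable {α β : Type*}

theorem induced_semiconj {f : α → α} {f' : β → β} {g : α → β} (hg : Injective g)
    (h : Semiconj g f f') (S : Set α) (b : α) :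
    induced f' (g '' S) (g b) = g (induced f S b) := by
  have hmem : ∀ k, f'^[k] (g b) ∈ g '' S ↔ f^[k] b ∈ S := fun k => by
    rw [← (h.iterate_right k) b, hg.mem_set_image]
  classical
  unfold induced
  by_cases hS : ∃ k, 0 < k ∧ f^[k] b ∈ S
  · have hS' : ∃ k, 0 < k ∧ f'^[k] (g b) ∈ g '' S := by simpa only [hmem] using hS
    rw [dif_pos hS', dif_pos hS, Nat.find_congr' (and_congr_right' (hmem _)), h.iterate_right]
  · rw [dif_neg (by simpa only [hmem] using hS), dif_neg hS]

variable {f : α → α} {f' : β → β} {g : α → β} {S : Set α}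

theorem MapsCyc3.image (hg : Injective g) (h : Semiconj g f f') {a b c : α}
    (H : MapsCyc3 f S a b c) : MapsCyc3 f' (g '' S) (g a) (g b) (g c) := by
  simp only [MapsCyc3, induced_semiconj hg h, H.1, H.2.1, H.2.2, and_self]

theorem MapsCyc4.image (hg : Injective g) (h : Semiconj g f f') {a b c d : α}
    (H : MapsCyc4 f S a b c d) : MapsCyc4 f' (g '' S) (g a) (g b) (g c) (g d) := by
  simp only [MapsCyc4, induced_semiconj hg h, H.1, H.2.1, H.2.2.1, H.2.2.2, and_self]

theorem MapsSwap2.image (hg : Injective g) (h : Semiconj g f f') {a b c d : α}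
    (H : MapsSwap2 f S a b c d) : MapsSwap2 f' (g '' S) (g a) (g b) (g c) (g d) := by
  simp only [MapsSwap2, induced_semiconj hg h, H.1, H.2.1, H.2.2.1, H.2.2.2, and_self]

theorem MapsSwap.image (hg : Injective g) (h : Semiconj g f f') {x y : α}
    (H : MapsSwap f S x y) : MapsSwap f' (g '' S) (g x) (g y) := by
  simp only [MapsSwap, induced_semiconj hg h, H.1, H.2, and_self]

end Induced

namespace Equiv.Perm

variable {α : Type*} (g σ : Perm α)

theorem semiconj_conj : Semiconj g σ (g * σ * g⁻¹) := fun x => by simp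

theorem _root_.Commute.semiconj_perm {g σ : Perm α} (h : Commute g σ) : Semiconj g σ σ :=
  fun x => DFunLike.congr_fun h.eq x

theorem image_setOf_sameCycle (a : α) :
    g '' {b | σ.SameCycle a b} = {b | (g * σ * g⁻¹).SameCycle (g a) b} := by
  ext b
  simp [g.image_eq_preimage_symm]

end Equiv.Perm

theorem isOrbit_conj_image_iff {α : Type*} (g σ : Equiv.Perm α) (B : Set α) :
    IsOrbit (g * σ * g⁻¹) (g '' B) ↔ IsOrbit σ B := by
  rw [IsOrbit, g.surjective.exists]
  simp only [← Equiv.Perm.image_setOf_sameCycle, (Set.image_injective.2 g.injective).eq_iff,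
    IsOrbit]

theorem List.formPerm_map_perm {α : Type*} [DecidableEq α] (g : Equiv.Perm α) :
    ∀ l : List α, (l.map g).formPerm = g * l.formPerm * g⁻¹
  | [] => by simp
  | [x] => by simp
  | x :: y :: l => by
    rw [List.map_cons, List.map_cons, List.formPerm_cons_cons, List.formPerm_cons_cons,
      ← List.map_cons, formPerm_map_perm g (y :: l), Equiv.swap_apply_apply]
    group

theorem List.mem_take_finRange_iff {n p : ℕ} (x : Fin n) :
    x ∈ (List.finRange n).take p ↔ (x : ℕ) < p := by
  rw [List.mem_take_iff_idxOf_lt (List.mem_finRange x), List.idxOf_finRange]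

theorem List.mem_drop_finRange_iff {n p : ℕ} (x : Fin n) :
    x ∈ (List.finRange n).drop p ↔ p ≤ (x : ℕ) := by
  have hx : x ∈ (List.finRange n).take p ++ (List.finRange n).drop p := by
    simp only [List.take_append_drop, List.mem_finRange]
  have hdisj := List.disjoint_take_drop (List.nodup_finRange n) (le_refl p)
  rw [List.mem_append, List.mem_take_finRange_iff] at hx
  constructor
  · intro hd
    exact not_lt.1 fun ht => hdisj ((List.mem_take_finRange_iff x).2 ht) hd
  · intro h
    exact hx.resolve_left (not_lt.2 h)

theorem commute_gammaExt_gammaInt (p q : ℕ) : Commute (gammaExt p q) (gammaInt p q) := by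
  refine Equiv.Perm.Disjoint.commute fun x => ?_
  by_cases hx : (x : ℕ) < p
  · exact Or.inr (List.formPerm_apply_of_notMem (by rwa [List.mem_drop_finRange_iff, not_le]))
  · exact Or.inl (List.formPerm_apply_of_notMem (by rwa [List.mem_take_finRange_iff]))

structure IsAnnularSymmetry (p q : ℕ) (g : Equiv.Perm (Fin (p + q))) : Prop where
  apply_mem_extSet_iff (x : Fin (p + q)) : g x ∈ extSet p q ↔ x ∈ extSet p q
  commute_gammaExt : Commute g (gammaExt p q)
  commute_gammaInt : Commute g (gammaInt p q)

theorem isAnnularSymmetry_gammaExt (p q : ℕ) : IsAnnularSymmetry p q (gammaExt p q) where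
  apply_mem_extSet_iff x := by
    simp only [extSet, Set.mem_ofPred_eq, ← List.mem_take_finRange_iff, gammaExt,
      List.formPerm_mem_iff_mem]
  commute_gammaExt := Commute.refl _
  commute_gammaInt := commute_gammaExt_gammaInt p q

theorem isAnnularSymmetry_gammaInt (p q : ℕ) : IsAnnularSymmetry p q (gammaInt p q) where
  apply_mem_extSet_iff x := by
    simp only [extSet, Set.mem_ofPred_eq, ← not_le, ← List.mem_drop_finRange_iff, gammaInt,
      List.formPerm_mem_iff_mem]
  commute_gammaExt := (commute_gammaExt_gammaInt p q).symm
  commute_gammaInt := Commute.refl _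

namespace IsAnnularSymmetry

variable {p q : ℕ} {g : Equiv.Perm (Fin (p + q))}

theorem inv (hg : IsAnnularSymmetry p q g) : IsAnnularSymmetry p q g⁻¹ where
  apply_mem_extSet_iff x := by simpa using (hg.apply_mem_extSet_iff (g⁻¹ x)).symm
  commute_gammaExt := hg.commute_gammaExt.inv_left
  commute_gammaInt := hg.commute_gammaInt.inv_left

theorem apply_mem_intSet_iff (hg : IsAnnularSymmetry p q g) (x : Fin (p + q)) :
    g x ∈ intSet p q ↔ x ∈ intSet p q := by
  simpa only [extSet, intSet, Set.mem_ofPred_eq, not_lt] using (hg.apply_mem_extSet_iff x).not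

theorem image_inter_extSet (hg : IsAnnularSymmetry p q g) (B : Set (Fin (p + q))) :
    g '' B ∩ extSet p q = g '' (B ∩ extSet p q) := by
  ext x
  obtain ⟨y, rfl⟩ := g.surjective x
  simp only [Set.mem_inter_iff, g.injective.mem_set_image, hg.apply_mem_extSet_iff]

theorem image_inter_intSet (hg : IsAnnularSymmetry p q g) (B : Set (Fin (p + q))) :
    g '' B ∩ intSet p q = g '' (B ∩ intSet p q) := by
  ext x
  obtain ⟨y, rfl⟩ := g.surjective x
  simp only [Set.mem_inter_iff, g.injective.mem_set_image, hg.apply_mem_intSet_iff]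

theorem semiconj_gammaAnn (hg : IsAnnularSymmetry p q g) :
    Semiconj g (gammaAnn p q) (gammaAnn p q) :=
  (hg.commute_gammaExt.mul_right hg.commute_gammaInt).semiconj_perm

theorem lamPerm_apply_apply (hg : IsAnnularSymmetry p q g) (x y : Fin (p + q)) :
    lamPerm p q (g x) (g y) = g * lamPerm p q x y * g⁻¹ := by
  unfold lamPerm
  rw [← List.formPerm_map_perm, List.map_append, List.map_map, List.map_map]
  congr 3 <;> funext k
  · exact ((hg.commute_gammaExt.pow_right (k + 1)).semiconj_perm x).symm
  · exact ((hg.commute_gammaInt.pow_right (k + 1)).semiconj_perm y).symm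

theorem semiconj_lamPerm (hg : IsAnnularSymmetry p q g) (x y : Fin (p + q)) :
    Semiconj g (lamPerm p q x y) (lamPerm p q (g x) (g y)) := by
  rw [hg.lamPerm_apply_apply]
  exact Equiv.Perm.semiconj_conj g _

end IsAnnularSymmetry

section Conj

variable {p q : ℕ} {g : Equiv.Perm (Fin (p + q))} {τ : Equiv.Perm (Fin (p + q))}

theorem AnnStandard.conj (hg : IsAnnularSymmetry p q g) (h : AnnStandard p q τ) :
    AnnStandard p q (g * τ * g⁻¹) := by
  have hτ := Equiv.Perm.semiconj_conj g τ
  constructor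
  · intro A hA
    obtain ⟨B, rfl⟩ := g.surjective.image_surjective A
    rw [isOrbit_conj_image_iff] at hA
    rw [hg.image_inter_extSet, hg.image_inter_intSet]
    constructor <;> rintro _ ⟨b, hb, rfl⟩
    · rw [induced_semiconj g.injective hτ,
        induced_semiconj g.injective hg.commute_gammaExt.semiconj_perm, (h.1 B hA).1 b hb]
    · rw [induced_semiconj g.injective hτ,
        induced_semiconj g.injective hg.commute_gammaInt.semiconj_perm, (h.1 B hA).2 b hb]
  · intro A hA hext hint
    obtain ⟨B, rfl⟩ := g.surjective.image_surjective A
    rw [isOrbit_conj_image_iff] at hA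
    rw [hg.image_inter_extSet, Set.image_nonempty] at hext
    rw [hg.image_inter_intSet, Set.image_nonempty] at hint
    obtain ⟨hout, hin⟩ := h.2 B hA hext hint
    rw [hg.image_inter_extSet, hg.image_inter_intSet]
    constructor
    · refine (Equiv.existsUnique_congr g fun a => ?_).1 hout
      rw [← hτ a, g.injective.mem_set_image, hg.apply_mem_intSet_iff]
    · refine (Equiv.existsUnique_congr g fun a => ?_).1 hin
      rw [← hτ a, g.injective.mem_set_image, hg.apply_mem_extSet_iff]

theorem AC1.conj (hg : IsAnnularSymmetry p q g) (h : AC1 p q τ) : AC1 p q (g * τ * g⁻¹) := by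
  obtain ⟨a, b, c, d, hne, hγ, hτ⟩ := h
  refine ⟨g a, g b, g c, g d, hne.map g fun _ _ => g.injective.ne, ?_, ?_⟩
  · simpa only [Set.image_insert_eq, Set.image_singleton]
      using hγ.image g.injective hg.semiconj_gammaAnn
  · simpa only [Set.image_insert_eq, Set.image_singleton]
      using hτ.image g.injective (Equiv.Perm.semiconj_conj g τ)

theorem AC2.conj (hg : IsAnnularSymmetry p q g) (h : AC2 p q τ) : AC2 p q (g * τ * g⁻¹) := by
  obtain ⟨a, b, c, x, y, hne, hx, hy, hlam, hτ, hxy⟩ := h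
  refine ⟨g a, g b, g c, g x, g y, hne.map g fun _ _ => g.injective.ne,
    (hg.apply_mem_extSet_iff x).2 hx, (hg.apply_mem_intSet_iff y).2 hy, ?_, ?_, ?_⟩
  · simpa only [Set.image_insert_eq, Set.image_singleton]
      using hlam.image g.injective (hg.semiconj_lamPerm x y)
  · simpa only [Set.image_insert_eq, Set.image_singleton]
      using hτ.image g.injective (Equiv.Perm.semiconj_conj g τ)
  · simpa only [Set.image_insert_eq, Set.image_singleton]
      using hxy.image g.injective (Equiv.Perm.semiconj_conj g τ)

theorem AC3.conj (hg : IsAnnularSymmetry p q g) (h : AC3 p q τ) : AC3 p q (g * τ * g⁻¹) := by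
  obtain ⟨a, b, c, d, x, y, hne, hx, hy, hlam, hτ, hxy⟩ := h
  refine ⟨g a, g b, g c, g d, g x, g y, hne.map g fun _ _ => g.injective.ne,
    (hg.apply_mem_extSet_iff x).2 hx, (hg.apply_mem_intSet_iff y).2 hy, ?_, ?_, ?_⟩
  · simpa only [Set.image_insert_eq, Set.image_singleton]
      using hlam.image g.injective (hg.semiconj_lamPerm x y)
  · simpa only [Set.image_insert_eq, Set.image_singleton]
      using hτ.image g.injective (Equiv.Perm.semiconj_conj g τ)
  · simpa only [Set.image_insert_eq, Set.image_singleton]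
      using hxy.image g.injective (Equiv.Perm.semiconj_conj g τ)

theorem AnnNC.conj (hg : IsAnnularSymmetry p q g) (h : AnnNC p q τ) :
    AnnNC p q (g * τ * g⁻¹) := by
  obtain ⟨hstd, h₁, h₂, h₃⟩ := h
  have hτ : g⁻¹ * (g * τ * g⁻¹) * g⁻¹⁻¹ = τ := by group
  refine ⟨hstd.conj hg, fun h₁' => h₁ ?_, fun h₂' => h₂ ?_, fun h₃' => h₃ ?_⟩
  · simpa only [hτ] using h₁'.conj hg.inv
  · simpa only [hτ] using h₂'.conj hg.inv
  · simpa only [hτ] using h₃'.conj hg.inv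

end Conj

theorem stmt_12_general (p q : ℕ)
    (τ : Equiv.Perm (Fin (p + q))) (h : AnnNC p q τ) :
    AnnNC p q (gammaExt p q * τ * (gammaExt p q)⁻¹) ∧
    AnnNC p q (gammaInt p q * τ * (gammaInt p q)⁻¹) :=
  ⟨h.conj (isAnnularSymmetry_gammaExt p q), h.conj (isAnnularSymmetry_gammaInt p q)⟩

/-- Lemma 5.2 1°: `S_ann-nc(p,q)` is invariant under conjugation with `γ_ext` and with
`γ_int`. -/
theorem stmt_12 (p q : ℕ) (hp : 0 < p) (hq : 0 < q)
    (τ : Equiv.Perm (Fin (p + q))) (h : AnnNC p q τ) :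
    AnnNC p q (gammaExt p q * τ * (gammaExt p q)⁻¹) ∧
    AnnNC p q (gammaInt p q * τ * (gammaInt p q)⁻¹) :=
  stmt_12_general p q τ h
end

section
/- Let p and q be positive integers. Then S_disc-nc(p+q) ⊆ S_ann-nc(p,q): every disc non-crossing permutation of [p+q] is (p,q)-annular non-crossing. -/
/-!
Disc standardness says that `τ` sends each point to the next point of its orbit in the cyclic
order `0 < 1 < ⋯ < p + q - 1`. Since induced permutations compose (`(τ∣A)∣T = τ∣T` for `T ⊆ A`),
every `τ∣S` then sends `u` to the first point of `S ∩ orbit(u)` after `u` in that cyclic order.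
On external (internal) points this is what `γ_ext` (`γ_int`) does, and the only point of an orbit
leaving the external (internal) points is the largest one there.

In each crossing pattern, `γ∣{a,b,c,d}` or `λ_{x,y}∣{a,b,c}`, `λ_{x,y}∣{a,b,c,d}` imposes a cyclic
order which, together with the one imposed by `τ`, makes two orbits of `τ` cross. The points `x`,
`y` cut the circle into two arcs; `λ_{x,y}` runs through each arc in increasing order, one arc
after the other, and non-crossing keeps every orbit other than that of `x, y` on a single arc.
Hence in (AC-2) the order `(a, b, c)` of `λ_{x,y}` is the natural one, contradicting the order
`(a, c, b)` of `τ`; in (AC-3) either all four points lie on one arc and `{a, c}`, `{b, d}` cross,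
or the pairs lie on different arcs, which `λ_{x,y}` cannot interleave.
-/

open Function Equiv

def CyclicallyOrdered {α : Type*} [LT α] (a b c : α) : Prop :=
  (a < b ∧ b < c) ∨ (b < c ∧ c < a) ∨ (c < a ∧ a < b)

theorem Nat.add_mod_of_lt {a b L : ℕ} (ha : a < L) (hb : b < L) :
    (a + b) % L = if a + b < L then a + b else a + b - L := by
  rw [Nat.add_mod_eq_ite, Nat.mod_eq_of_lt ha, Nat.mod_eq_of_lt hb]
  split_ifs <;> omega

namespace CyclicallyOrdered

theorem not_swap {α : Type*} [Preorder α] {a b c : α} (h : CyclicallyOrdered a b c) :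
    ¬ CyclicallyOrdered a c b := by
  rintro (⟨h₁, h₂⟩ | ⟨h₁, h₂⟩ | ⟨h₁, h₂⟩) <;>
    rcases h with ⟨h₃, h₄⟩ | ⟨h₃, h₄⟩ | ⟨h₃, h₄⟩ <;> order

theorem add_mod {i k k' L : ℕ} (hi : i < L) (hk : 0 < k) (hkk' : k < k') (hk' : k' < L) :
    CyclicallyOrdered i ((i + k) % L) ((i + k') % L) := by
  rw [CyclicallyOrdered, Nat.add_mod_of_lt hi (hkk'.trans hk'), Nat.add_mod_of_lt hi hk']
  split_ifs <;> omega

end CyclicallyOrdered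

section Induced

variable {α : Type*} {f g : α → α} {S T A : Set α} {u : α}

theorem induced_of_not_exists (h : ¬ ∃ k, 0 < k ∧ f^[k] u ∈ S) : induced f S u = u := by
  rw [induced, dif_neg h]

theorem exists_first_hit_of_exists (h : ∃ k, 0 < k ∧ f^[k] u ∈ S) :
    ∃ k, 0 < k ∧ f^[k] u ∈ S ∧ (∀ j, 0 < j → j < k → f^[j] u ∉ S) ∧
      induced f S u = f^[k] u := by
  classical
  refine ⟨Nat.find h, (Nat.find_spec h).1, (Nat.find_spec h).2,
    fun j hj hjk hjS => Nat.find_min h hjk ⟨hj, hjS⟩, ?_⟩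
  rw [induced, dif_pos h]

theorem induced_eq_iterate {k : ℕ} (hk : 0 < k) (hkS : f^[k] u ∈ S)
    (hmin : ∀ j, 0 < j → j < k → f^[j] u ∉ S) : induced f S u = f^[k] u := by
  obtain ⟨k', hk', hk'S, hmin', he⟩ := exists_first_hit_of_exists ⟨k, hk, hkS⟩
  rw [he, show k' = k by
    rcases lt_trichotomy k' k with h | h | h
    exacts [absurd hk'S (hmin k' hk' h), h, absurd hkS (hmin' k hk h)]]

theorem exists_iterate_eq_induced (f : α → α) (S : Set α) (u : α) :
    ∃ k, f^[k] u = induced f S u := by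
  by_cases h : ∃ k, 0 < k ∧ f^[k] u ∈ S
  · obtain ⟨k, -, -, -, he⟩ := exists_first_hit_of_exists h
    exact ⟨k, he.symm⟩
  · exact ⟨0, (induced_of_not_exists h).symm⟩

theorem induced_mem_of_exists (h : ∃ k, 0 < k ∧ f^[k] u ∈ S) : induced f S u ∈ S := by
  obtain ⟨k, -, hkS, -, he⟩ := exists_first_hit_of_exists h
  rwa [he]

theorem induced_mem_s13 (hu : u ∈ S) : induced f S u ∈ S := by
  by_cases h : ∃ k, 0 < k ∧ f^[k] u ∈ S
  · exact induced_mem_of_exists h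
  · rwa [induced_of_not_exists h]

theorem induced_eq_self_of_subset_singleton (h : S ⊆ {u}) : induced f S u = u := by
  by_cases hS : ∃ k, 0 < k ∧ f^[k] u ∈ S
  · exact h (induced_mem_of_exists hS)
  · exact induced_of_not_exists hS

theorem induced_congr (hfg : ∀ k, f^[k] u = g^[k] u)
    (hST : ∀ k, 0 < k → (f^[k] u ∈ S ↔ f^[k] u ∈ T)) : induced f S u = induced g T u := by
  by_cases h : ∃ k, 0 < k ∧ f^[k] u ∈ S
  · obtain ⟨k, hk, hkS, hmin, he⟩ := exists_first_hit_of_exists h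
    rw [he, hfg, induced_eq_iterate hk (hfg k ▸ (hST k hk).1 hkS)]
    intro j hj hjk hjT
    exact hmin j hj hjk ((hST j hj).2 (hfg j ▸ hjT))
  · rw [induced_of_not_exists h, induced_of_not_exists]
    rintro ⟨k, hk, hkT⟩
    exact h ⟨k, hk, (hST k hk).2 (hfg k ▸ hkT)⟩

theorem iterate_induced_eq_iterate (hret : ∀ z ∈ A, ∃ k, 0 < k ∧ f^[k] z ∈ A) (hu : u ∈ A) (m : ℕ) :
    ∃ k, m ≤ k ∧ (induced f A)^[m] u = f^[k] u := by
  induction m with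
  | zero => exact ⟨0, le_rfl, rfl⟩
  | succ m ih =>
    obtain ⟨k, hmk, he⟩ := ih
    have hA : f^[k] u ∈ A := he ▸ (Set.MapsTo.iterate (fun _ => induced_mem_s13) m) hu
    obtain ⟨j, hj, -, -, hj'⟩ := exists_first_hit_of_exists (hret _ hA)
    refine ⟨j + k, by omega, ?_⟩
    rw [iterate_succ_apply', he, hj', iterate_add_apply]

theorem exists_iterate_induced_eq_first_hit (hret : ∀ z ∈ A, ∃ k, 0 < k ∧ f^[k] z ∈ A)
    (hTA : T ⊆ A) {k : ℕ} (hu : u ∈ A) (hk : 0 < k) (hkT : f^[k] u ∈ T)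
    (hmin : ∀ j, 0 < j → j < k → f^[j] u ∉ T) :
    ∃ m, 0 < m ∧ (induced f A)^[m] u = f^[k] u ∧ ∀ j, 0 < j → j < m → (induced f A)^[j] u ∉ T := by
  induction k using Nat.strong_induction_on generalizing u with
  | _ k ih =>
    obtain ⟨k₁, hk₁, hk₁A, hmin₁, he₁⟩ := exists_first_hit_of_exists (hret u hu)
    have hk₁k : k₁ ≤ k := not_lt.1 fun hlt => hmin₁ k hk hlt (hTA hkT)
    rcases hk₁k.eq_or_lt with rfl | hlt
    · exact ⟨1, one_pos, he₁, fun j hj hj1 => by omega⟩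
    have hsplit : f^[k] u = f^[k - k₁] (f^[k₁] u) := by
      rw [← iterate_add_apply, Nat.sub_add_cancel hk₁k]
    obtain ⟨m, hm, hme, hmmin⟩ := ih (k - k₁) (by omega) hk₁A (by omega) (hsplit ▸ hkT)
      fun j hj hjk => by rw [← iterate_add_apply]; exact hmin _ (by omega) (by omega)
    refine ⟨m + 1, by omega, by rw [iterate_succ_apply, he₁, hme, hsplit], ?_⟩
    rintro (_ | _ | j) hj hjm
    · omega
    · rw [iterate_one, he₁]
      exact hmin k₁ hk₁ hlt
    · rw [iterate_succ_apply, he₁]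
      exact hmmin (j + 1) (by omega) (by omega)

theorem induced_induced (hret : ∀ z ∈ A, ∃ k, 0 < k ∧ f^[k] z ∈ A) (hTA : T ⊆ A) (hu : u ∈ A) :
    induced (induced f A) T u = induced f T u := by
  by_cases h : ∃ k, 0 < k ∧ f^[k] u ∈ T
  · obtain ⟨k, hk, hkT, hmin, he⟩ := exists_first_hit_of_exists h
    obtain ⟨m, hm, hme, hmmin⟩ := exists_iterate_induced_eq_first_hit hret hTA hu hk hkT hmin
    rw [he, ← hme]
    exact induced_eq_iterate hm (hme ▸ hkT) hmmin
  · rw [induced_of_not_exists h, induced_of_not_exists]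
    rintro ⟨m, hm, hmT⟩
    obtain ⟨k, hmk, he⟩ := iterate_induced_eq_iterate hret hu m
    exact h ⟨k, by omega, he ▸ hmT⟩

end Induced

theorem Equiv.Perm.exists_pos_iterate_mem {α : Type*} [Finite α] (σ : Perm α) {A : Set α}
    {z : α} (hz : z ∈ A) : ∃ k, 0 < k ∧ σ^[k] z ∈ A := by
  obtain ⟨k, hk, hper⟩ := mem_periodicPts.1 (σ.injective.mem_periodicPts z)
  exact ⟨k, hk, by rwa [hper.eq]⟩

theorem Equiv.Perm.sameCycle_induced {α : Type*} (σ : Perm α) (S : Set α) (u : α) :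
    σ.SameCycle u (induced σ S u) := by
  obtain ⟨k, hk⟩ := exists_iterate_eq_induced σ S u
  exact ⟨k, by rw [zpow_natCast, ← hk, Perm.iterate_eq_pow]⟩

theorem Nat.exists_add_mod_eq {i j L : ℕ} (hi : i < L) (hj : j < L) :
    ∃ d < L, (i + d) % L = j := by
  rcases le_or_gt i j with h | h
  · exact ⟨j - i, by omega, by rw [Nat.add_sub_cancel' h, Nat.mod_eq_of_lt hj]⟩
  · exact ⟨j + L - i, by omega, by
      rw [show i + (j + L - i) = j + L by omega, Nat.add_mod_right, Nat.mod_eq_of_lt hj]⟩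

namespace List

variable {α : Type*} [DecidableEq α] {l : List α} {T : Set α} {u w : α}

theorem formPerm_iterate_apply_of_mem (hl : l.Nodup) (hu : u ∈ l) (k : ℕ) :
    (⇑l.formPerm)^[k] u = l[(l.idxOf u + k) % l.length]'(Nat.mod_lt _ (length_pos_of_mem hu)) := by
  conv_lhs => rw [← getElem_idxOf (idxOf_lt_length_iff.2 hu)]
  rw [Perm.iterate_eq_pow, formPerm_pow_apply_getElem _ hl]

theorem idxOf_formPerm_iterate (hl : l.Nodup) (hu : u ∈ l) (k : ℕ) :
    l.idxOf ((⇑l.formPerm)^[k] u) = (l.idxOf u + k) % l.length := by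
  rw [formPerm_iterate_apply_of_mem hl hu, hl.idxOf_getElem]

theorem exists_formPerm_iterate_eq (hl : l.Nodup) (hu : u ∈ l) (hw : w ∈ l) :
    ∃ d < l.length, (⇑l.formPerm)^[d] u = w := by
  obtain ⟨d, hd, hdw⟩ := Nat.exists_add_mod_eq (idxOf_lt_length_iff.2 hu) (idxOf_lt_length_iff.2 hw)
  refine ⟨d, hd, ?_⟩
  simp only [formPerm_iterate_apply_of_mem hl hu, hdw, getElem_idxOf]

theorem formPerm_iterate_mem (hu : u ∈ l) (k : ℕ) : (⇑l.formPerm)^[k] u ∈ l :=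
  Set.MapsTo.iterate (s := {z | z ∈ l}) (fun _ => formPerm_apply_mem_of_mem) k hu

theorem exists_pos_formPerm_iterate_mem (hl : l.Nodup) (hu : u ∈ l) (hwT : w ∈ T) (hwl : w ∈ l)
    (hwu : w ≠ u) : ∃ k, 0 < k ∧ (⇑l.formPerm)^[k] u ∈ T := by
  obtain ⟨d, -, hd⟩ := exists_formPerm_iterate_eq hl hu hwl
  refine ⟨d, Nat.pos_of_ne_zero ?_, hd ▸ hwT⟩
  rintro rfl
  exact hwu hd.symm

theorem cyclicallyOrdered_idxOf_induced_formPerm (hl : l.Nodup) (hu : u ∈ l) (hwT : w ∈ T)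
    (hwl : w ∈ l) (hwu : w ≠ u) (hwv : w ≠ induced l.formPerm T u) :
    CyclicallyOrdered (l.idxOf u) (l.idxOf (induced l.formPerm T u)) (l.idxOf w) := by
  obtain ⟨k, hk, -, hmin, he⟩ :=
    exists_first_hit_of_exists (exists_pos_formPerm_iterate_mem hl hu hwT hwl hwu)
  obtain ⟨d, hd, rfl⟩ := exists_formPerm_iterate_eq hl hu hwl
  have hd0 : 0 < d := Nat.pos_of_ne_zero fun h => hwu (by simp [h])
  have hkd : k < d := lt_of_le_of_ne (not_lt.1 fun h => hmin d hd0 h hwT)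
    fun h => hwv (h ▸ he).symm
  rw [he, idxOf_formPerm_iterate hl hu, idxOf_formPerm_iterate hl hu]
  exact .add_mod (idxOf_lt_length_iff.2 hu) hk hkd hd

theorem induced_formPerm_ne_self (hl : l.Nodup) (hu : u ∈ l) (hwT : w ∈ T) (hwl : w ∈ l)
    (hwu : w ≠ u) : induced l.formPerm T u ≠ u := by
  intro h
  have := cyclicallyOrdered_idxOf_induced_formPerm hl hu hwT hwl hwu (by rwa [h])
  rw [h, CyclicallyOrdered] at this
  omega

theorem induced_formPerm_eq_of_cyclicallyOrdered {l' : List α} (hl : l.Nodup) (hl' : l'.Nodup)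
    (hu : u ∈ l) (hu' : u ∈ l') (hT : ∀ z ∈ T, z ∈ l) (hT' : ∀ z ∈ T, z ∈ l')
    (hcyc : ∀ v ∈ T, ∀ w ∈ T, CyclicallyOrdered (l.idxOf u) (l.idxOf v) (l.idxOf w) →
      CyclicallyOrdered (l'.idxOf u) (l'.idxOf v) (l'.idxOf w)) :
    induced l.formPerm T u = induced l'.formPerm T u := by
  by_cases hTu : T ⊆ {u}
  · rw [induced_eq_self_of_subset_singleton hTu, induced_eq_self_of_subset_singleton hTu]
  obtain ⟨w, hwT, hwu⟩ := Set.not_subset.1 hTu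
  have hv : induced l.formPerm T u ∈ T :=
    induced_mem_of_exists (exists_pos_formPerm_iterate_mem hl hu hwT (hT w hwT) hwu)
  have hv' : induced l'.formPerm T u ∈ T :=
    induced_mem_of_exists (exists_pos_formPerm_iterate_mem hl' hu' hwT (hT' w hwT) hwu)
  by_contra hne
  exact (hcyc _ hv _ hv' (cyclicallyOrdered_idxOf_induced_formPerm hl hu hv' (hT _ hv')
    (induced_formPerm_ne_self hl' hu' hwT (hT' w hwT) hwu) (Ne.symm hne))).not_swap
    (cyclicallyOrdered_idxOf_induced_formPerm hl' hu' hv (hT' _ hv)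
      (induced_formPerm_ne_self hl hu hwT (hT w hwT) hwu) hne)

variable {n p : ℕ} {z : Fin n}

theorem nodup_take_finRange : ((finRange n).take p).Nodup :=
  (nodup_finRange n).sublist (take_sublist _ _)

theorem nodup_drop_finRange : ((finRange n).drop p).Nodup :=
  (nodup_finRange n).sublist (drop_sublist _ _)

theorem mem_take_finRange : z ∈ (finRange n).take p ↔ (z : ℕ) < p := by
  rw [mem_take_iff_idxOf_lt (mem_finRange z), idxOf_finRange]

theorem idxOf_take_finRange (hz : (z : ℕ) < p) : ((finRange n).take p).idxOf z = z := by
  rw [(take_prefix p _).idxOf_eq_of_mem (mem_take_finRange.2 hz), idxOf_finRange]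

theorem mem_drop_finRange : z ∈ (finRange n).drop p ↔ p ≤ (z : ℕ) := by
  have h := mem_finRange z
  rw [← take_append_drop p (finRange n), mem_append, mem_take_finRange] at h
  have hd := disjoint_take_drop (nodup_finRange n) (le_refl p) (a := z)
  rw [mem_take_finRange] at hd
  exact ⟨fun hz => not_lt.1 fun hp => hd hp hz, fun hp => h.resolve_left (by omega)⟩

theorem idxOf_drop_finRange (hz : p ≤ (z : ℕ)) : ((finRange n).drop p).idxOf z = z - p := by
  have h := idxOf_finRange z
  rw [← take_append_drop p (finRange n),
    idxOf_append_of_notMem (by rw [mem_take_finRange]; omega), length_take, length_finRange] at h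
  omega

end List

theorem finRotate_eq_formPerm_finRange (n : ℕ) : finRotate n = (List.finRange n).formPerm := by
  ext z
  rcases n with _ | n
  · exact z.elim0
  conv_rhs => rw [show z = (List.finRange (n + 1))[(z : ℕ)]'(by simpa using z.isLt) by simp]
  rw [List.formPerm_apply_getElem _ (List.nodup_finRange _), coe_finRotate]
  simp only [List.getElem_finRange, List.length_finRange, Fin.val_cast]
  split_ifs with h
  · simp [h]
  · have : (z : ℕ) < n := Fin.val_lt_last h
    simp [Nat.mod_eq_of_lt (Nat.succ_lt_succ this)]

theorem IsOrbit.eq_setOf_sameCycle {α : Type*} {τ : Perm α} {A : Set α} (hA : IsOrbit τ A)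
    {b : α} (hb : b ∈ A) : A = {w | τ.SameCycle b w} := by
  obtain ⟨a, rfl⟩ := hA
  exact Set.ext fun w => ⟨fun hw => (hb : τ.SameCycle a b).symm.trans hw, hb.trans⟩

theorem iterate_eq_iterate_of_eqOn {α : Type*} {f g : α → α} {A : Set α} (hf : Set.MapsTo f A A)
    (hfg : Set.EqOn f g A) {u : α} (hu : u ∈ A) (k : ℕ) : f^[k] u = g^[k] u := by
  induction k with
  | zero => rfl
  | succ k ih => rw [iterate_succ_apply', iterate_succ_apply', ← ih, hfg (hf.iterate k hu)]

namespace DiscStandardRel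

variable {n : ℕ} {τ : Perm (Fin n)} {S : Set (Fin n)} {u w : Fin n}

theorem induced_eq (hstd : DiscStandardRel (finRotate n) τ) (S : Set (Fin n)) (u : Fin n) :
    induced τ S u = induced (finRotate n) (S ∩ {w | τ.SameCycle u w}) u := by
  set A := {w | τ.SameCycle u w}
  have hu : u ∈ A := Perm.SameCycle.refl τ u
  calc induced τ S u = induced τ (S ∩ A) u :=
        induced_congr (fun _ => rfl) fun k _ =>
          (and_iff_left (⟨k, by rw [zpow_natCast, Perm.iterate_eq_pow]⟩ : τ.SameCycle u _)).symm
    _ = induced (induced τ A) (S ∩ A) u :=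
        (induced_induced (fun _ => τ.exists_pos_iterate_mem) Set.inter_subset_right hu).symm
    _ = induced (induced (finRotate n) A) (S ∩ A) u :=
        induced_congr (iterate_eq_iterate_of_eqOn (fun _ => induced_mem_s13) (hstd A ⟨u, rfl⟩) hu)
          fun _ _ => Iff.rfl
    _ = induced (finRotate n) (S ∩ A) u :=
        induced_induced (fun _ => (finRotate n).exists_pos_iterate_mem) Set.inter_subset_right hu

theorem induced_eq_of_subset (hstd : DiscStandardRel (finRotate n) τ) {A : Set (Fin n)}
    (hA : IsOrbit τ A) (hSA : S ⊆ A) (hu : u ∈ A) :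
    induced τ S u = induced (finRotate n) S u := by
  rw [hstd.induced_eq, ← hA.eq_setOf_sameCycle hu, Set.inter_eq_left.2 hSA]

theorem cyclicallyOrdered (hstd : DiscStandardRel (finRotate n) τ) (hwS : w ∈ S)
    (hw : τ.SameCycle u w) (hwu : w ≠ u) (hwv : w ≠ induced τ S u) :
    CyclicallyOrdered u (induced τ S u) w := by
  rw [hstd.induced_eq] at hwv ⊢
  rw [finRotate_eq_formPerm_finRange] at hwv ⊢
  have h := List.cyclicallyOrdered_idxOf_induced_formPerm (List.nodup_finRange n)
    (List.mem_finRange u) (T := S ∩ {w | τ.SameCycle u w}) ⟨hwS, hw⟩ (List.mem_finRange w) hwu hwv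
  simp only [List.idxOf_finRange] at h
  exact h

theorem cyclicallyOrdered_apply (hstd : DiscStandardRel (finRotate n) τ) (hw : τ.SameCycle u w)
    (hwu : w ≠ u) (hwv : w ≠ τ u) : CyclicallyOrdered u (τ u) w := by
  have h : induced τ Set.univ u = τ u := induced_eq_iterate one_pos trivial (by omega)
  exact h ▸ hstd.cyclicallyOrdered (Set.mem_univ w) hw hwu (h ▸ hwv)

theorem not_sameCycle_of_swap (hstd : DiscStandardRel (finRotate n) τ) {v : Fin n}
    (huv : induced τ S u = v) (hvu : induced τ S v = u) (hwS : w ∈ S) (hwu : w ≠ u)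
    (hwv : w ≠ v) : ¬ τ.SameCycle u w := by
  intro hw
  have h₁ := hstd.cyclicallyOrdered hwS hw hwu (huv ▸ hwv)
  have h₂ := hstd.cyclicallyOrdered hwS ((huv ▸ τ.sameCycle_induced S u).symm.trans hw) hwv
    (hvu ▸ hwu)
  rw [huv, CyclicallyOrdered] at h₁
  rw [hvu, CyclicallyOrdered] at h₂
  omega

/-- The exit point is the largest point of `A ∩ S`. -/
theorem existsUnique_exit (hstd : DiscStandardRel (finRotate n) τ) {A : Set (Fin n)}
    (hA : IsOrbit τ A) (hS : S.OrdConnected) (hin : (A ∩ S).Nonempty) (hout : (A ∩ Sᶜ).Nonempty) :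
    ∃! a, a ∈ A ∩ S ∧ τ a ∈ Sᶜ := by
  have hsc : ∀ {a b}, a ∈ A → b ∈ A → τ.SameCycle a b := fun ha hb => by
    rwa [hA.eq_setOf_sameCycle ha] at hb
  have hτA : ∀ {a}, a ∈ A → τ a ∈ A := fun ha => by
    rw [hA.eq_setOf_sameCycle ha]
    exact (Perm.SameCycle.refl τ _).apply_right
  have hmax : ∀ {a}, a ∈ A ∩ S → τ a ∈ Sᶜ → ∀ b ∈ A ∩ S, b ≤ a := by
    intro a ha hτa b hb
    by_contra! hab
    have h := hstd.cyclicallyOrdered_apply (hsc ha.1 hb.1) hab.ne' fun h => hτa (h ▸ hb.2)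
    rcases h with ⟨h₁, h₂⟩ | ⟨h₁, h₂⟩ | ⟨h₁, h₂⟩
    · exact hτa (hS.out ha.2 hb.2 ⟨h₁.le, h₂.le⟩)
    all_goals omega
  obtain ⟨m, hm, hmmax⟩ := Set.exists_max_image (A ∩ S) id (Set.toFinite _) hin
  obtain ⟨w, hwA, hwS⟩ := hout
  have hτm : τ m ∈ Sᶜ := by
    intro hτm
    have h := hstd.cyclicallyOrdered_apply (hsc hm.1 hwA) (fun h => hwS (h ▸ hm.2))
      fun h => hwS (h ▸ hτm)
    have := hmmax _ ⟨hτA hm.1, hτm⟩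
    rcases h with ⟨h₁, h₂⟩ | ⟨h₁, h₂⟩ | ⟨h₁, h₂⟩
    · simp only [id] at this; omega
    · exact hwS (hS.out hτm hm.2 ⟨h₁.le, h₂.le⟩)
    · simp only [id] at this; omega
  exact ⟨m, ⟨hm, hτm⟩, fun a ⟨ha, hτa⟩ => le_antisymm (hmmax a ha) (hmax ha hτa m hm)⟩

end DiscStandardRel

namespace OrbitsNoCrossing

variable {n : ℕ} {τ : Perm (Fin n)}

theorem false_of_cyclicallyOrdered (hnc : OrbitsNoCrossing τ) {a b c d : Fin n}
    (hac : τ.SameCycle a c) (hbd : τ.SameCycle b d) (hab : ¬ τ.SameCycle a b)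
    (habc : CyclicallyOrdered a b c) (hcda : CyclicallyOrdered c d a) : False := by
  have cross : ∀ {a b c d : Fin n}, a < b → b < c → c < d → τ.SameCycle a c →
      τ.SameCycle b d → ¬ τ.SameCycle a b → False :=
    fun h₁ h₂ h₃ h₄ h₅ h₆ => hnc ⟨_, _, _, _, h₁, h₂, h₃, h₄, h₅, h₆⟩
  unfold CyclicallyOrdered at habc hcda
  rcases (by omega : (a < b ∧ b < c ∧ c < d) ∨ (b < c ∧ c < d ∧ d < a) ∨
      (c < d ∧ d < a ∧ a < b) ∨ (d < a ∧ a < b ∧ b < c)) with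
    ⟨h₁, h₂, h₃⟩ | ⟨h₁, h₂, h₃⟩ | ⟨h₁, h₂, h₃⟩ | ⟨h₁, h₂, h₃⟩
  · exact cross h₁ h₂ h₃ hac hbd hab
  · exact cross h₁ h₂ h₃ hbd hac.symm fun h => hab (hac.trans h.symm)
  · exact cross h₁ h₂ h₃ hac.symm hbd.symm fun h => hab (hac.trans (h.trans hbd.symm))
  · exact cross h₁ h₂ h₃ hbd.symm hac fun h => hab (h.symm.trans hbd.symm)

theorem mem_Ioo_iff (hnc : OrbitsNoCrossing τ) {x y z w : Fin n} (hxy : τ.SameCycle x y)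
    (hzw : τ.SameCycle z w) (hxz : ¬ τ.SameCycle x z) : z ∈ Set.Ioo x y ↔ w ∈ Set.Ioo x y := by
  have key : ∀ {z w}, τ.SameCycle z w → ¬ τ.SameCycle x z → z ∈ Set.Ioo x y → w ∈ Set.Ioo x y := by
    intro z w hzw hxz ⟨hxz', hzy⟩
    by_contra hw
    have hwx : w ≠ x := fun h => hxz (h ▸ hzw.symm)
    have hwy : w ≠ y := fun h => hxz (hxy.trans (h ▸ hzw.symm))
    refine hnc.false_of_cyclicallyOrdered hxy hzw hxz (Or.inl ⟨hxz', hzy⟩) ?_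
    simp only [Set.mem_Ioo, not_and_or, not_lt] at hw
    unfold CyclicallyOrdered
    omega
  exact ⟨key hzw hxz, key hzw.symm fun h => hxz (h.trans hzw.symm)⟩

end OrbitsNoCrossing

section Annulus

variable {p q : ℕ}

theorem compl_extSet : (extSet p q)ᶜ = intSet p q := by
  ext z
  simp [extSet, intSet]

theorem compl_intSet : (intSet p q)ᶜ = extSet p q := by
  rw [← compl_extSet, compl_compl]

theorem ordConnected_extSet : (extSet p q).OrdConnected :=
  ⟨fun _ _ _ hb _ hz => lt_of_le_of_lt (Fin.le_def.1 hz.2) hb⟩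

theorem ordConnected_intSet : (intSet p q).OrdConnected :=
  ⟨fun _ ha _ _ _ hz => le_trans ha (Fin.le_def.1 hz.1)⟩

theorem mem_take_iff_mem_extSet {z : Fin (p + q)} :
    z ∈ (List.finRange (p + q)).take p ↔ z ∈ extSet p q :=
  List.mem_take_finRange

theorem mem_drop_iff_mem_intSet {z : Fin (p + q)} :
    z ∈ (List.finRange (p + q)).drop p ↔ z ∈ intSet p q :=
  List.mem_drop_finRange

theorem gammaExt_apply_of_mem_intSet {z : Fin (p + q)} (hz : z ∈ intSet p q) :
    gammaExt p q z = z :=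
  List.formPerm_apply_of_notMem fun h => (compl_extSet ▸ hz) (mem_take_iff_mem_extSet.1 h)

theorem gammaInt_apply_of_mem_extSet {z : Fin (p + q)} (hz : z ∈ extSet p q) :
    gammaInt p q z = z :=
  List.formPerm_apply_of_notMem fun h => (compl_intSet ▸ hz) (mem_drop_iff_mem_intSet.1 h)

theorem gammaAnn_iterate_of_mem_extSet {z : Fin (p + q)} (hz : z ∈ extSet p q) (k : ℕ) :
    (⇑(gammaAnn p q))^[k] z = (⇑(gammaExt p q))^[k] z := by
  have heq : Set.EqOn (gammaAnn p q) (gammaExt p q) (extSet p q) := fun z hz => by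
    simp [gammaAnn, gammaInt_apply_of_mem_extSet hz]
  refine iterate_eq_iterate_of_eqOn (fun z hz => ?_) heq hz k
  rw [heq hz, ← mem_take_iff_mem_extSet]
  exact List.formPerm_apply_mem_of_mem (mem_take_iff_mem_extSet.2 hz)

theorem gammaAnn_iterate_of_mem_intSet {z : Fin (p + q)} (hz : z ∈ intSet p q) (k : ℕ) :
    (⇑(gammaAnn p q))^[k] z = (⇑(gammaInt p q))^[k] z := by
  have hmaps : Set.MapsTo (gammaInt p q) (intSet p q) (intSet p q) := fun z hz => by
    rw [← mem_drop_iff_mem_intSet]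
    exact List.formPerm_apply_mem_of_mem (mem_drop_iff_mem_intSet.2 hz)
  have heq : Set.EqOn (gammaAnn p q) (gammaInt p q) (intSet p q) := fun z hz => by
    simp [gammaAnn, gammaExt_apply_of_mem_intSet (hmaps hz)]
  exact iterate_eq_iterate_of_eqOn (fun z hz => heq hz ▸ hmaps hz) heq hz k

theorem induced_gammaAnn_mem_extSet_iff (T : Set (Fin (p + q))) (u : Fin (p + q)) :
    induced (gammaAnn p q) T u ∈ extSet p q ↔ u ∈ extSet p q := by
  obtain ⟨k, hk⟩ := exists_iterate_eq_induced (gammaAnn p q) T u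
  rw [← hk]
  by_cases hu : u ∈ extSet p q
  · rw [gammaAnn_iterate_of_mem_extSet hu, ← mem_take_iff_mem_extSet]
    exact iff_of_true (List.formPerm_iterate_mem (mem_take_iff_mem_extSet.2 hu) k) hu
  · have hu' : u ∈ intSet p q := compl_extSet ▸ hu
    rw [gammaAnn_iterate_of_mem_intSet hu']
    refine iff_of_false (fun h => ?_) hu
    have := mem_drop_iff_mem_intSet.1 (List.formPerm_iterate_mem (mem_drop_iff_mem_intSet.2 hu') k)
    exact (compl_extSet ▸ this : _ ∈ (extSet p q)ᶜ) h

theorem cyclicallyOrdered_induced_gammaAnn {T : Set (Fin (p + q))} {u w : Fin (p + q)}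
    (huw : u ∈ extSet p q ↔ w ∈ extSet p q) (hwT : w ∈ T) (hwu : w ≠ u)
    (hwv : w ≠ induced (gammaAnn p q) T u) :
    CyclicallyOrdered u (induced (gammaAnn p q) T u) w := by
  by_cases hu : u ∈ extSet p q
  · have hv := (induced_gammaAnn_mem_extSet_iff T u).2 hu
    rw [induced_congr (gammaAnn_iterate_of_mem_extSet hu) fun _ _ => Iff.rfl] at hv hwv ⊢
    unfold gammaExt at hv hwv ⊢
    have h := List.cyclicallyOrdered_idxOf_induced_formPerm List.nodup_take_finRange
      (mem_take_iff_mem_extSet.2 hu) hwT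
      (mem_take_iff_mem_extSet.2 (huw.1 hu)) hwu hwv
    rwa [List.idxOf_take_finRange hu, List.idxOf_take_finRange hv,
      List.idxOf_take_finRange (huw.1 hu)] at h
  · have hv := mt (induced_gammaAnn_mem_extSet_iff T u).1 hu
    have hw := mt huw.2 hu
    rw [← Set.mem_compl_iff, compl_extSet] at hu hv hw
    rw [induced_congr (gammaAnn_iterate_of_mem_intSet hu) fun _ _ => Iff.rfl] at hv hwv ⊢
    unfold gammaInt at hv hwv ⊢
    have h := List.cyclicallyOrdered_idxOf_induced_formPerm List.nodup_drop_finRange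
      (mem_drop_iff_mem_intSet.2 hu) hwT
      (mem_drop_iff_mem_intSet.2 hw) hwu hwv
    rw [List.idxOf_drop_finRange hu, List.idxOf_drop_finRange hv,
      List.idxOf_drop_finRange hw] at h
    simp only [intSet, Set.mem_ofPred_eq] at hu hv hw
    unfold CyclicallyOrdered at h ⊢
    omega

theorem induced_finRotate_eq_gammaExt {T : Set (Fin (p + q))} (hT : T ⊆ extSet p q)
    {u : Fin (p + q)} (hu : u ∈ extSet p q) :
    induced (finRotate (p + q)) T u = induced (gammaExt p q) T u := by
  rw [finRotate_eq_formPerm_finRange]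
  refine List.induced_formPerm_eq_of_cyclicallyOrdered (List.nodup_finRange _)
    List.nodup_take_finRange (List.mem_finRange u)
    (mem_take_iff_mem_extSet.2 hu) (fun z _ => List.mem_finRange z)
    (fun z hz => mem_take_iff_mem_extSet.2 (hT hz)) fun v hv w hw h => ?_
  rwa [List.idxOf_take_finRange hu, List.idxOf_take_finRange (hT hv),
    List.idxOf_take_finRange (hT hw), ← List.idxOf_finRange u, ← List.idxOf_finRange v,
    ← List.idxOf_finRange w]

theorem induced_finRotate_eq_gammaInt {T : Set (Fin (p + q))} (hT : T ⊆ intSet p q)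
    {u : Fin (p + q)} (hu : u ∈ intSet p q) :
    induced (finRotate (p + q)) T u = induced (gammaInt p q) T u := by
  rw [finRotate_eq_formPerm_finRange]
  refine List.induced_formPerm_eq_of_cyclicallyOrdered (List.nodup_finRange _)
    List.nodup_drop_finRange (List.mem_finRange u)
    (mem_drop_iff_mem_intSet.2 hu) (fun z _ => List.mem_finRange z)
    (fun z hz => mem_drop_iff_mem_intSet.2 (hT hz)) fun v hv w hw h => ?_
  have hv' : p ≤ (v : ℕ) := hT hv
  have hw' : p ≤ (w : ℕ) := hT hw
  have hu' : p ≤ (u : ℕ) := hu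
  rw [List.idxOf_finRange, List.idxOf_finRange, List.idxOf_finRange] at h
  rw [List.idxOf_drop_finRange hu, List.idxOf_drop_finRange hv', List.idxOf_drop_finRange hw']
  unfold CyclicallyOrdered at h ⊢
  omega

end Annulus

section Lambda

variable {p q : ℕ} {x y : Fin (p + q)}

def lamList (p q : ℕ) (x y : Fin (p + q)) : List (Fin (p + q)) :=
  ((List.range (p - 1)).map fun k => (gammaExt p q ^ (k + 1)) x) ++
    ((List.range (q - 1)).map fun k => (gammaInt p q ^ (k + 1)) y)

/-- The position of `z` on the cycle of `λ_{x,y}`, counted from `γ_ext(x)`. -/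
def lamPos (p q : ℕ) (x y z : Fin (p + q)) : ℕ :=
  if (z : ℕ) < p then (if (x : ℕ) < z then (z : ℕ) - x - 1 else (z : ℕ) + p - 1 - x)
  else p - 1 + (if (y : ℕ) < z then (z : ℕ) - y - 1 else (z : ℕ) + q - 1 - y)

theorem val_gammaExt_pow_apply (hx : x ∈ extSet p q) (k : ℕ) :
    ((gammaExt p q ^ k) x : ℕ) = ((x : ℕ) + k) % p := by
  have hx' := mem_take_iff_mem_extSet.2 hx
  have h := List.idxOf_formPerm_iterate List.nodup_take_finRange hx' k
  rwa [List.idxOf_take_finRange (mem_take_iff_mem_extSet.1 (List.formPerm_iterate_mem hx' k)),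
    List.idxOf_take_finRange hx, List.length_take, List.length_finRange,
    min_eq_left (Nat.le_add_right p q), Perm.iterate_eq_pow] at h

theorem val_gammaInt_pow_apply (hy : y ∈ intSet p q) (k : ℕ) :
    ((gammaInt p q ^ k) y : ℕ) = p + ((y : ℕ) - p + k) % q := by
  rw [← Perm.iterate_eq_pow]
  unfold gammaInt
  have hy' := mem_drop_iff_mem_intSet.2 hy
  have hk := mem_drop_iff_mem_intSet.1 (List.formPerm_iterate_mem hy' k)
  have h := List.idxOf_formPerm_iterate List.nodup_drop_finRange hy' k
  rw [List.idxOf_drop_finRange hk, List.idxOf_drop_finRange hy, List.length_drop,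
    List.length_finRange, Nat.add_sub_cancel_left] at h
  have hk' : p ≤ _ := hk
  omega

theorem length_lamList : (lamList p q x y).length = p - 1 + (q - 1) := by
  simp [lamList]

theorem val_getElem_lamList (hx : x ∈ extSet p q) (hy : y ∈ intSet p q) {i : ℕ}
    (hi : i < (lamList p q x y).length) :
    ((lamList p q x y)[i] : ℕ) =
      if i < p - 1 then ((x : ℕ) + (i + 1)) % p else p + ((y : ℕ) - p + (i - (p - 1) + 1)) % q := by
  simp only [lamList, List.getElem_append, List.length_map, List.length_range, List.getElem_map,
    List.getElem_range]
  split_ifs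
  · exact val_gammaExt_pow_apply hx _
  · exact val_gammaInt_pow_apply hy _

theorem lamPos_getElem_lamList (hx : x ∈ extSet p q) (hy : y ∈ intSet p q) {i : ℕ}
    (hi : i < (lamList p q x y).length) : lamPos p q x y (lamList p q x y)[i] = i := by
  have hx' : (x : ℕ) < p := hx
  have hy' : p ≤ (y : ℕ) := hy
  have hyq := y.isLt
  have hval := val_getElem_lamList hx hy hi
  rw [length_lamList] at hi
  unfold lamPos
  split_ifs at hval with h
  · rw [Nat.add_mod_of_lt hx' (by omega)] at hval
    split_ifs at hval ⊢ <;> omega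
  · rw [Nat.add_mod_of_lt (by omega : (y : ℕ) - p < q) (by omega)] at hval
    split_ifs at hval ⊢ <;> omega

theorem nodup_lamList (hx : x ∈ extSet p q) (hy : y ∈ intSet p q) : (lamList p q x y).Nodup :=
  List.nodup_iff_injective_get.2 fun i j h => Fin.ext <| by
    simpa [lamPos_getElem_lamList hx hy] using congrArg (lamPos p q x y) h

theorem getElem_lamPos (hx : x ∈ extSet p q) (hy : y ∈ intSet p q) {z : Fin (p + q)}
    (hzx : z ≠ x) (hzy : z ≠ y) :
    ∃ h : lamPos p q x y z < (lamList p q x y).length, (lamList p q x y)[lamPos p q x y z] = z := by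
  have hx' : (x : ℕ) < p := hx
  have hy' : p ≤ (y : ℕ) := hy
  have hzx' : (z : ℕ) ≠ x := Fin.val_ne_of_ne hzx
  have hzy' : (z : ℕ) ≠ y := Fin.val_ne_of_ne hzy
  have hyq := y.isLt
  have hzq := z.isLt
  have hlt : lamPos p q x y z < (lamList p q x y).length := by
    rw [length_lamList, lamPos]
    split_ifs <;> omega
  refine ⟨hlt, Fin.ext ?_⟩
  rw [val_getElem_lamList hx hy]
  split_ifs with h
  · rw [Nat.add_mod_of_lt hx' (by omega)]
    unfold lamPos at h ⊢
    split_ifs at h ⊢ <;> omega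
  · rw [Nat.add_mod_of_lt (by omega : (y : ℕ) - p < q) (by rw [length_lamList] at hlt; omega)]
    unfold lamPos at h ⊢
    split_ifs at h ⊢ <;> omega

theorem idxOf_lamList (hx : x ∈ extSet p q) (hy : y ∈ intSet p q) {z : Fin (p + q)}
    (hzx : z ≠ x) (hzy : z ≠ y) :
    z ∈ lamList p q x y ∧ (lamList p q x y).idxOf z = lamPos p q x y z := by
  obtain ⟨h, hz⟩ := getElem_lamPos hx hy hzx hzy
  have hidx := (nodup_lamList hx hy).idxOf_getElem _ h
  rw [hz] at hidx
  exact ⟨hz ▸ List.getElem_mem h, hidx⟩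

theorem cyclicallyOrdered_lamPos_of_induced (hx : x ∈ extSet p q) (hy : y ∈ intSet p q)
    {T : Set (Fin (p + q))} {u w : Fin (p + q)} (hux : u ≠ x) (huy : u ≠ y)
    (hvx : induced (lamPerm p q x y) T u ≠ x) (hvy : induced (lamPerm p q x y) T u ≠ y)
    (hwx : w ≠ x) (hwy : w ≠ y) (hwT : w ∈ T) (hwu : w ≠ u)
    (hwv : w ≠ induced (lamPerm p q x y) T u) :
    CyclicallyOrdered (lamPos p q x y u) (lamPos p q x y (induced (lamPerm p q x y) T u))
      (lamPos p q x y w) := by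
  obtain ⟨hu, hu'⟩ := idxOf_lamList hx hy hux huy
  obtain ⟨-, hv'⟩ := idxOf_lamList hx hy hvx hvy
  obtain ⟨hw, hw'⟩ := idxOf_lamList hx hy hwx hwy
  rw [← hu', ← hv', ← hw']
  exact List.cyclicallyOrdered_idxOf_induced_formPerm (nodup_lamList hx hy) hu hwT hw hwu hwv

theorem lamPos_lt_lamPos_iff (hx : x ∈ extSet p q) (hy : y ∈ intSet p q) {z w : Fin (p + q)}
    (hzx : z ≠ x) (hzy : z ≠ y) (hwx : w ≠ x) (hwy : w ≠ y)
    (hzw : z ∈ Set.Ioo x y ↔ w ∈ Set.Ioo x y) :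
    lamPos p q x y z < lamPos p q x y w ↔ z < w := by
  have hx' : (x : ℕ) < p := hx
  have hy' : p ≤ (y : ℕ) := hy
  simp only [Set.mem_Ioo] at hzw
  unfold lamPos
  split_ifs <;> omega

theorem lamPos_mem_Ico_iff (hx : x ∈ extSet p q) (hy : y ∈ intSet p q) {z : Fin (p + q)}
    (hzx : z ≠ x) (hzy : z ≠ y) :
    lamPos p q x y z ∈ Set.Ico (p - 1 - x) (2 * p + q - 2 - y) ↔ z ∉ Set.Ioo x y := by
  have hx' : (x : ℕ) < p := hx
  have hy' : p ≤ (y : ℕ) := hy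
  have hzq := z.isLt
  simp only [Set.mem_Ico, Set.mem_Ioo]
  unfold lamPos
  split_ifs <;> omega

theorem cyclicallyOrdered_of_lamPos (hx : x ∈ extSet p q) (hy : y ∈ intSet p q)
    {a b c : Fin (p + q)} (hax : a ≠ x) (hay : a ≠ y) (hbx : b ≠ x) (hby : b ≠ y) (hcx : c ≠ x)
    (hcy : c ≠ y) (hab : a ∈ Set.Ioo x y ↔ b ∈ Set.Ioo x y)
    (hbc : b ∈ Set.Ioo x y ↔ c ∈ Set.Ioo x y)
    (h : CyclicallyOrdered (lamPos p q x y a) (lamPos p q x y b) (lamPos p q x y c)) :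
    CyclicallyOrdered a b c := by
  rwa [CyclicallyOrdered, lamPos_lt_lamPos_iff hx hy hax hay hbx hby hab,
    lamPos_lt_lamPos_iff hx hy hbx hby hcx hcy hbc,
    lamPos_lt_lamPos_iff hx hy hcx hcy hax hay (hab.trans hbc).symm] at h

theorem not_cyclicallyOrdered_lamPos_of_separated (hx : x ∈ extSet p q) (hy : y ∈ intSet p q)
    {a b c d : Fin (p + q)} (hax : a ≠ x) (hay : a ≠ y) (hbx : b ≠ x) (hby : b ≠ y)
    (hcx : c ≠ x) (hcy : c ≠ y) (hdx : d ≠ x) (hdy : d ≠ y)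
    (hac : a ∈ Set.Ioo x y ↔ c ∈ Set.Ioo x y) (hbd : b ∈ Set.Ioo x y ↔ d ∈ Set.Ioo x y)
    (hab : ¬ (a ∈ Set.Ioo x y ↔ b ∈ Set.Ioo x y))
    (habc : CyclicallyOrdered (lamPos p q x y a) (lamPos p q x y b) (lamPos p q x y c)) :
    ¬ CyclicallyOrdered (lamPos p q x y c) (lamPos p q x y d) (lamPos p q x y a) := by
  rw [← not_iff_not, ← lamPos_mem_Ico_iff hx hy hax hay, ← lamPos_mem_Ico_iff hx hy hcx hcy] at hac
  rw [← not_iff_not, ← lamPos_mem_Ico_iff hx hy hbx hby, ← lamPos_mem_Ico_iff hx hy hdx hdy] at hbd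
  rw [← not_iff_not, ← lamPos_mem_Ico_iff hx hy hax hay, ← lamPos_mem_Ico_iff hx hy hbx hby] at hab
  simp only [Set.mem_Ico] at hac hbd hab
  unfold CyclicallyOrdered at habc ⊢
  omega

end Lambda

section AnnularNonCrossing

variable {p q : ℕ} {τ : Perm (Fin (p + q))}

theorem DiscStandardRel.annStandard (hstd : DiscStandardRel (finRotate (p + q)) τ) :
    AnnStandard p q τ := by
  refine ⟨fun A hA => ⟨?_, ?_⟩, fun A hA hext hint => ⟨?_, ?_⟩⟩
  · rintro b ⟨hbA, hb⟩
    rw [hstd.induced_eq_of_subset hA Set.inter_subset_left hbA]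
    exact induced_finRotate_eq_gammaExt Set.inter_subset_right hb
  · rintro b ⟨hbA, hb⟩
    rw [hstd.induced_eq_of_subset hA Set.inter_subset_left hbA]
    exact induced_finRotate_eq_gammaInt Set.inter_subset_right hb
  · rw [← compl_extSet] at hint ⊢
    exact hstd.existsUnique_exit hA ordConnected_extSet hext hint
  · rw [← compl_intSet] at hext ⊢
    exact hstd.existsUnique_exit hA ordConnected_intSet hint hext

theorem not_AC1 (hstd : DiscStandardRel (finRotate (p + q)) τ) (hnc : OrbitsNoCrossing τ) :
    ¬ AC1 p q τ := by
  rintro ⟨a, b, c, d, hdist, ⟨hab, hbc, hcd, hda⟩, ⟨hac, hca, hbd, -⟩⟩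
  simp only [List.pairwise_cons, List.mem_cons, List.not_mem_nil, forall_eq_or_imp, forall_eq,
    or_false, List.Pairwise.nil, and_true] at hdist
  obtain ⟨⟨hab', hac', had'⟩, ⟨hbc', hbd'⟩, hcd'⟩ := hdist
  have hside : ∀ {u v}, induced (gammaAnn p q) {a, b, c, d} u = v →
      (u ∈ extSet p q ↔ v ∈ extSet p q) := fun h => h ▸ (induced_gammaAnn_mem_extSet_iff _ _).symm
  have habc := cyclicallyOrdered_induced_gammaAnn (T := {a, b, c, d}) (w := c)
    ((hside hab).trans (hside hbc)) (by simp) (Ne.symm hac') (by rw [hab]; exact Ne.symm hbc')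
  have hcda := cyclicallyOrdered_induced_gammaAnn (T := {a, b, c, d}) (w := a)
    ((hside hcd).trans (hside hda)) (by simp) hac' (by rw [hcd]; exact had')
  rw [hab] at habc
  rw [hcd] at hcda
  exact hnc.false_of_cyclicallyOrdered (hac ▸ τ.sameCycle_induced _ a)
    (hbd ▸ τ.sameCycle_induced _ b)
    (hstd.not_sameCycle_of_swap hac hca (by simp) (Ne.symm hab') hbc') habc hcda

theorem not_AC2 (hstd : DiscStandardRel (finRotate (p + q)) τ) (hnc : OrbitsNoCrossing τ) :
    ¬ AC2 p q τ := by
  rintro ⟨a, b, c, x, y, hdist, hx, hy, ⟨hab, -, -⟩, ⟨hac, hcb, -⟩, hxy, hyx⟩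
  simp only [List.pairwise_cons, List.mem_cons, List.not_mem_nil, forall_eq_or_imp, forall_eq,
    or_false, List.Pairwise.nil, and_true] at hdist
  obtain ⟨⟨hab', hac', hax, hay⟩, ⟨hbc', hbx, hby⟩, ⟨hcx, hcy⟩, -⟩ := hdist
  have h_ac : τ.SameCycle a c := hac ▸ τ.sameCycle_induced _ a
  have h_ab : τ.SameCycle a b := h_ac.trans (hcb ▸ τ.sameCycle_induced _ c)
  have h_xy : τ.SameCycle x y := hxy ▸ τ.sameCycle_induced _ x
  have h_xa : ¬ τ.SameCycle x a := hstd.not_sameCycle_of_swap hxy hyx (by simp) hax hay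
  have hlam := cyclicallyOrdered_lamPos_of_induced hx hy (T := {a, b, c}) (w := c) hax hay
    (by rwa [hab]) (by rwa [hab]) hcx hcy (by simp) (Ne.symm hac') (by rw [hab]; exact Ne.symm hbc')
  rw [hab] at hlam
  have hτ := hstd.cyclicallyOrdered (S := {a, b, c, x, y}) (w := b) (by simp) h_ab (Ne.symm hab')
    (by rw [hac]; exact hbc')
  rw [hac] at hτ
  have harc_b := hnc.mem_Ioo_iff h_xy h_ab h_xa
  have harc_c := hnc.mem_Ioo_iff h_xy h_ac h_xa
  exact (cyclicallyOrdered_of_lamPos hx hy hax hay hbx hby hcx hcy harc_b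
    (harc_b.symm.trans harc_c) hlam).not_swap hτ

theorem not_AC3 (hstd : DiscStandardRel (finRotate (p + q)) τ) (hnc : OrbitsNoCrossing τ) :
    ¬ AC3 p q τ := by
  rintro ⟨a, b, c, d, x, y, hdist, hx, hy, ⟨hab, -, hcd, -⟩, ⟨hac, hca, hbd, -⟩, hxy, hyx⟩
  simp only [List.pairwise_cons, List.mem_cons, List.not_mem_nil, forall_eq_or_imp, forall_eq,
    or_false, List.Pairwise.nil, and_true] at hdist
  obtain ⟨⟨hab', hac', had', hax, hay⟩, ⟨hbc', hbd', hbx, hby⟩, ⟨hcd', hcx, hcy⟩, ⟨hdx, hdy⟩, -⟩ :=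
    hdist
  have h_ac : τ.SameCycle a c := hac ▸ τ.sameCycle_induced _ a
  have h_bd : τ.SameCycle b d := hbd ▸ τ.sameCycle_induced _ b
  have h_xy : τ.SameCycle x y := hxy ▸ τ.sameCycle_induced _ x
  have h_ab : ¬ τ.SameCycle a b := hstd.not_sameCycle_of_swap hac hca (by simp) (Ne.symm hab') hbc'
  have harc_c := hnc.mem_Ioo_iff h_xy h_ac (hstd.not_sameCycle_of_swap hxy hyx (by simp) hax hay)
  have harc_d := hnc.mem_Ioo_iff h_xy h_bd (hstd.not_sameCycle_of_swap hxy hyx (by simp) hbx hby)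
  have habc := cyclicallyOrdered_lamPos_of_induced hx hy (T := {a, b, c, d}) (w := c) hax hay
    (by rwa [hab]) (by rwa [hab]) hcx hcy (by simp) (Ne.symm hac') (by rw [hab]; exact Ne.symm hbc')
  have hcda := cyclicallyOrdered_lamPos_of_induced hx hy (T := {a, b, c, d}) (w := a) hcx hcy
    (by rwa [hcd]) (by rwa [hcd]) hax hay (by simp) hac' (by rw [hcd]; exact had')
  rw [hab] at habc
  rw [hcd] at hcda
  by_cases harc_b : a ∈ Set.Ioo x y ↔ b ∈ Set.Ioo x y
  · exact hnc.false_of_cyclicallyOrdered h_ac h_bd h_ab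
      (cyclicallyOrdered_of_lamPos hx hy hax hay hbx hby hcx hcy harc_b
        (harc_b.symm.trans harc_c) habc)
      (cyclicallyOrdered_of_lamPos hx hy hcx hcy hdx hdy hax hay
        (harc_c.symm.trans (harc_b.trans harc_d)) (harc_d.symm.trans harc_b.symm) hcda)
  · exact not_cyclicallyOrdered_lamPos_of_separated hx hy hax hay hbx hby hcx hcy hdx hdy
      harc_c harc_d harc_b habc hcda

end AnnularNonCrossing

theorem stmt_13_general (p q : ℕ)
    (τ : Equiv.Perm (Fin (p + q))) (h : DiscNC τ) :
    AnnNC p q τ := by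
  obtain ⟨hstd, hnc⟩ := h
  exact ⟨hstd.annStandard, not_AC1 hstd hnc, not_AC2 hstd hnc, not_AC3 hstd hnc⟩

/-- Lemma 5.2 2°: `S_disc-nc(p+q) ⊆ S_ann-nc(p,q)`. -/
theorem stmt_13 (p q : ℕ) (hp : 0 < p) (hq : 0 < q)
    (τ : Equiv.Perm (Fin (p + q))) (h : DiscNC τ) :
    AnnNC p q τ :=
  stmt_13_general p q τ h
end

section
/- Let p and q be positive integers, let G be the subgroup of S([p+q]) generated by γ_ext and γ_int, and let U be a set of (p,q)-connected permutations of [p+q] such that U is invariant under conjugation by elements of G. Set U₀ = {τ ∈ U : τ(p) = p+1}. Then U = {στσ⁻¹ : σ ∈ G, τ ∈ U₀}. -/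
/-
A connected `τ` has a connecting orbit, and walking along it from an external point one
finds an external `x` with `τ x` internal. Since `⟨γ_ext, γ_int⟩` acts transitively on
pairs (external point, internal point), some `σ` in it sends `(p, p+1)` to `(x, τ x)`;
then `σ⁻¹ τ σ` lies in `U` and sends `p` to `p+1`.
-/

open Equiv

theorem Equiv.Perm.SameCycle.exists_mem_apply_notMem {α : Type*} [Finite α] {f : Perm α}
    {s : Set α} {u v : α} (h : f.SameCycle u v) (hu : u ∈ s) (hv : v ∉ s) :
    ∃ x ∈ s, f x ∉ s := by
  by_contra! hmaps
  obtain ⟨n, rfl⟩ := h.exists_nat_pow_eq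
  exact hv (Perm.coe_pow f n ▸ Set.MapsTo.iterate hmaps n hu)

theorem mem_extSet {p q : ℕ} {x : Fin (p + q)} : x ∈ extSet p q ↔ (x : ℕ) < p := Iff.rfl

theorem mem_intSet {p q : ℕ} {x : Fin (p + q)} : x ∈ intSet p q ↔ p ≤ (x : ℕ) := Iff.rfl

theorem AnnConnected.exists_ext_apply_int {p q : ℕ} {τ : Perm (Fin (p + q))}
    (h : AnnConnected p q τ) : ∃ x : Fin (p + q), (x : ℕ) < p ∧ p ≤ (τ x : ℕ) := by
  obtain ⟨A, ⟨a, rfl⟩, ⟨u, hua, hu⟩, ⟨v, hva, hv⟩⟩ := h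
  obtain ⟨x, hx, hτx⟩ := (hua.symm.trans hva).exists_mem_apply_notMem hu
    (by rw [mem_extSet]; exact not_lt.2 (mem_intSet.1 hv))
  exact ⟨x, hx, le_of_not_gt hτx⟩

section Gamma

variable {p q : ℕ}

def gammaGroup (p q : ℕ) : Subgroup (Perm (Fin (p + q))) :=
  Subgroup.closure {gammaExt p q, gammaInt p q}

theorem gammaExt_pow_apply_val (n : ℕ) {i : Fin (p + q)} (hi : (i : ℕ) < p) :
    ((gammaExt p q ^ n) i : ℕ) = (i + n) % p := by
  have hnd : ((List.finRange (p + q)).take p).Nodup :=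
    (List.take_sublist _ _).nodup (List.nodup_finRange _)
  have key := List.formPerm_pow_apply_getElem _ hnd n i (by simpa using hi)
  simp only [List.getElem_take, List.getElem_finRange, List.length_take,
    List.length_finRange, Fin.cast_mk] at key
  rw [gammaExt, key]
  simp

theorem gammaInt_pow_apply_val (n : ℕ) {i : Fin (p + q)} (hi : p ≤ (i : ℕ)) :
    ((gammaInt p q ^ n) i : ℕ) = p + (i - p + n) % q := by
  have hnd : ((List.finRange (p + q)).drop p).Nodup :=
    (List.drop_sublist _ _).nodup (List.nodup_finRange _)
  have key := List.formPerm_pow_apply_getElem _ hnd n (i - p) (by simp only [List.length_drop, List.length_finRange]; omega)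
  simp only [List.getElem_drop, List.getElem_finRange, List.length_drop,
    List.length_finRange, Fin.cast_mk, Nat.add_sub_cancel_left] at key
  rw [show i = ⟨p + (i - p), by omega⟩ from Fin.ext (by simp only; omega), gammaInt, key]
  simp

theorem gammaExt_pow_apply_of_le (n : ℕ) {i : Fin (p + q)} (hi : p ≤ (i : ℕ)) :
    (gammaExt p q ^ n) i = i := by
  refine Perm.pow_apply_eq_self_of_apply_eq_self (List.formPerm_apply_of_notMem ?_) n
  intro hmem
  obtain ⟨k, hk, rfl⟩ := List.mem_iff_getElem.mp hmem
  simp only [List.length_take, List.length_finRange, List.getElem_take, List.getElem_finRange,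
    Fin.cast_mk] at hk hi
  omega

theorem gammaInt_pow_apply_of_lt (n : ℕ) {i : Fin (p + q)} (hi : (i : ℕ) < p) :
    (gammaInt p q ^ n) i = i := by
  refine Perm.pow_apply_eq_self_of_apply_eq_self (List.formPerm_apply_of_notMem ?_) n
  intro hmem
  obtain ⟨k, hk, rfl⟩ := List.mem_iff_getElem.mp hmem
  simp at hi

theorem exists_mem_gammaGroup_apply_eq {x y : Fin (p + q)} (hx : (x : ℕ) < p)
    (hy : p ≤ (y : ℕ)) :
    ∃ σ ∈ gammaGroup p q, σ ⟨p - 1, by omega⟩ = x ∧ σ ⟨p, by omega⟩ = y := by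
  refine ⟨gammaExt p q ^ ((x : ℕ) + 1) * gammaInt p q ^ ((y : ℕ) - p),
    mul_mem (pow_mem (Subgroup.subset_closure (by simp)) _)
      (pow_mem (Subgroup.subset_closure (by simp)) _), ?_, ?_⟩
  · rw [Perm.mul_apply, gammaInt_pow_apply_of_lt _ (show p - 1 < p by omega)]
    ext
    rw [gammaExt_pow_apply_val _ (show p - 1 < p by omega),
      show p - 1 + (x + 1) = x + p by omega, Nat.add_mod_right, Nat.mod_eq_of_lt hx]
  · have hp : p ≤ ((⟨p, by omega⟩ : Fin (p + q)) : ℕ) := le_rfl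
    rw [Perm.mul_apply, gammaExt_pow_apply_of_le _ (by rw [gammaInt_pow_apply_val _ hp]; omega)]
    ext
    rw [gammaInt_pow_apply_val _ hp, Nat.sub_self, Nat.zero_add,
      Nat.mod_eq_of_lt (by omega)]
    omega

end Gamma

/-- Lemma 6.3: if `G` is the subgroup of `S([p+q])` generated by `γ_ext` and `γ_int`, and
`U` is a set of `(p,q)`-connected permutations invariant under conjugation by elements of
`G`, then with `U₀ = {τ ∈ U : τ(p) = p+1}` one has `U = {στσ⁻¹ : σ ∈ G, τ ∈ U₀}`. -/
theorem stmt_17 (p q : ℕ) (hq : 0 < q)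
    (U : Set (Equiv.Perm (Fin (p + q))))
    (hconn : ∀ τ ∈ U, AnnConnected p q τ)
    (hinv : ∀ σ ∈ Subgroup.closure ({gammaExt p q, gammaInt p q} :
        Set (Equiv.Perm (Fin (p + q)))), ∀ τ ∈ U, σ * τ * σ⁻¹ ∈ U) :
    U = {ρ : Equiv.Perm (Fin (p + q)) |
          ∃ σ ∈ Subgroup.closure ({gammaExt p q, gammaInt p q} :
              Set (Equiv.Perm (Fin (p + q)))),
            ∃ τ ∈ U, τ ⟨p - 1, by omega⟩ = ⟨p, by omega⟩ ∧ ρ = σ * τ * σ⁻¹} := by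
  ext ρ
  constructor
  · intro hρ
    obtain ⟨x, hx, hρx⟩ := (hconn ρ hρ).exists_ext_apply_int
    obtain ⟨σ, hσ, hσx, hσy⟩ := exists_mem_gammaGroup_apply_eq hx hρx
    refine ⟨σ, hσ, σ⁻¹ * ρ * σ, by simpa using hinv σ⁻¹ (inv_mem hσ) ρ hρ, ?_, by group⟩
    rw [Perm.mul_apply, Perm.mul_apply, hσx, ← hσy]
    exact Perm.inv_eq_iff_eq.mpr rfl
  · rintro ⟨σ, hσ, τ, hτ, -, rfl⟩
    exact hinv σ hσ τ hτ
end
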